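/- arXiv:1407.5043 — 7 statements merged into one kernel-verified Lean document; each statement's English description precedes it below -/
import Mathlib

section
/- For α ∈ (0,1] and integer m ≥ 2, define c_{k,t} = ∏_{h=k}^{t} (1 - α/(m+h+1)) for 1 ≤ k ≤ t and c_{t+1,t} = 1. Then sup_{t ≥ k} | c_{k,t} / (k/t)^α − 1 | → 0 as k → ∞. -/
/-!
By Bernoulli's inequality `(1 + s)^α ≤ 1 + α s` (for `0 ≤ α ≤ 1`), each factor satisfies
`((x - 1)/x)^α ≤ 1 - α/x ≤ (x/(x + 1))^α` with `x = m + h + 1`. Both bounds telescope, so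
`((m + k)/(m + t + 1))^α ≤ c_{k,t} ≤ ((m + k + 1)/(m + t + 2))^α`, which squeezes
`c_{k,t}/(k/t)^α` between `(t/(m + t + 1))^α` and `((m + k + 1)/k)^α`. Hence
`|c_{k,t}/(k/t)^α - 1| ≤ (m + 1)/k` uniformly in `t ≥ k`.
-/

open Filter Finset Real

theorem Finset.prod_Icc_div_succ_of_ne_zero {G₀ : Type*} [CommGroupWithZero G₀] {f : ℕ → G₀}
    (hf : ∀ i, f i ≠ 0) {m n : ℕ} (hmn : m ≤ n) :
    ∏ i ∈ Icc m n, f i / f (i + 1) = f m / f (n + 1) := by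
  have := congrArg Units.val (prod_Icc_div hmn fun i ↦ (Units.mk0 (f i) (hf i))⁻¹)
  simpa [Units.val_div_eq_div_val, div_eq_mul_inv, mul_comm] using this

section

variable {α a x : ℝ} {k t : ℕ}

theorem Real.rpow_div_rpow_succ_le_one_sub_div (hα0 : 0 ≤ α) (hα1 : α ≤ 1) (hx : 0 ≤ x) :
    x ^ α / (x + 1) ^ α ≤ 1 - α / (x + 1) := by
  have hx1 : 0 < x + 1 := by linarith
  have hs : -1 ≤ -1 / (x + 1) := by
    rw [neg_div, neg_le_neg_iff, div_le_one hx1]; linarith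
  rw [← div_rpow hx hx1.le]
  convert rpow_one_add_le_one_add_mul_self hs hα0 hα1 using 1
  · congr 1; field_simp; ring
  · ring

theorem Real.one_sub_div_le_rpow_div_rpow_succ (hα0 : 0 ≤ α) (hα1 : α ≤ 1) (hx : 0 < x) :
    1 - α / x ≤ x ^ α / (x + 1) ^ α := by
  have hB : 0 < ((x + 1) / x) ^ α := by positivity
  have hbern : ((x + 1) / x) ^ α ≤ 1 + α / x := by
    have hs : -1 ≤ 1 / x := by linarith [one_div_pos.2 hx]
    convert rpow_one_add_le_one_add_mul_self hs hα0 hα1 using 1 <;> field_simp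
  rw [← div_rpow hx.le (by positivity), ← inv_div (x + 1) x, inv_rpow (by positivity), ← one_div,
    le_div_iff₀ hB]
  -- `(1 - α/x) (1 + α/x) ≤ 1`
  rcases le_total 0 (1 - α / x) with h | h
  · nlinarith [sq_nonneg (α / x)]
  · nlinarith

theorem rpow_div_le_prod_Icc_one_sub_div (hα0 : 0 ≤ α) (hα1 : α ≤ 1) (ha : 0 < a) (hkt : k ≤ t) :
    ((a + k) / (a + t + 1)) ^ α ≤ ∏ h ∈ Icc k t, (1 - α / (a + h + 1)) := by
  have hf : ∀ h : ℕ, (a + h) ^ α ≠ 0 := fun h ↦ by positivity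
  have htele := prod_Icc_div_succ_of_ne_zero hf hkt
  simp only [Nat.cast_succ, ← add_assoc] at htele
  rw [div_rpow (by positivity) (by positivity), ← htele]
  exact prod_le_prod (fun h _ ↦ by positivity) fun h _ ↦
    rpow_div_rpow_succ_le_one_sub_div hα0 hα1 (by positivity)

theorem prod_Icc_one_sub_div_le_rpow_div (hα0 : 0 ≤ α) (hα1 : α ≤ 1) (ha : 0 < a) (hkt : k ≤ t) :
    ∏ h ∈ Icc k t, (1 - α / (a + h + 1)) ≤ ((a + k + 1) / (a + t + 2)) ^ α := by
  have hf : ∀ h : ℕ, (a + h + 1) ^ α ≠ 0 := fun h ↦ by positivity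
  have htele := prod_Icc_div_succ_of_ne_zero hf hkt
  simp only [Nat.cast_succ, ← add_assoc] at htele
  rw [add_assoc _ 1 1, one_add_one_eq_two] at htele
  rw [div_rpow (by positivity) (by positivity), ← htele]
  refine prod_le_prod (fun h _ ↦ ?_) fun h _ ↦
    one_sub_div_le_rpow_div_rpow_succ hα0 hα1 (by positivity)
  have : α ≤ a + h + 1 := by linarith [(Nat.cast_nonneg h : (0 : ℝ) ≤ h)]
  exact sub_nonneg.2 ((div_le_one (by positivity)).2 this)

theorem abs_prod_Icc_one_sub_div_div_rpow_sub_one_le (hα0 : 0 ≤ α) (hα1 : α ≤ 1) (ha : 0 < a)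
    (hk : 0 < k) (hkt : k ≤ t) :
    |(∏ h ∈ Icc k t, (1 - α / (a + h + 1))) / ((k : ℝ) / t) ^ α - 1| ≤ (a + 1) / k := by
  set c := ∏ h ∈ Icc k t, (1 - α / (a + h + 1))
  have hk' : (0 : ℝ) < k := Nat.cast_pos.2 hk
  have hkt' : (k : ℝ) ≤ t := Nat.cast_le.2 hkt
  have ht' : (0 : ℝ) < t := hk'.trans_le hkt'
  have hpow : 0 < ((k : ℝ) / t) ^ α := by positivity
  have hlower : (t / (a + t + 1)) ^ α ≤ c / (k / t) ^ α := by
    rw [le_div_iff₀ hpow, ← mul_rpow (by positivity) (by positivity), div_mul_div_cancel₀' ht'.ne']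
    refine le_trans (rpow_le_rpow (by positivity) ?_ hα0)
      (rpow_div_le_prod_Icc_one_sub_div hα0 hα1 ha hkt)
    gcongr; linarith
  have hupper : c / (k / t) ^ α ≤ ((a + k + 1) / k) ^ α := by
    rw [div_le_iff₀ hpow, ← mul_rpow (by positivity) (by positivity), div_mul_div_cancel₀ hk'.ne']
    refine (prod_Icc_one_sub_div_le_rpow_div hα0 hα1 ha hkt).trans
      (rpow_le_rpow (by positivity) ?_ hα0)
    gcongr; linarith
  rw [abs_sub_le_iff]
  constructor
  · calc c / (k / t) ^ α - 1 ≤ (a + k + 1) / k - 1 := by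
          have := rpow_le_self_of_one_le ((one_le_div hk').2 (by linarith : (k : ℝ) ≤ a + k + 1)) hα1
          linarith
      _ = (a + 1) / k := by field_simp; ring
  · calc 1 - c / (k / t) ^ α ≤ 1 - t / (a + t + 1) := by
          have := self_le_rpow_of_le_one (by positivity)
            ((div_le_one (by positivity)).2 (by linarith : (t : ℝ) ≤ a + t + 1)) hα1
          linarith
      _ = (a + 1) / (a + t + 1) := by field_simp; ring
      _ ≤ (a + 1) / k := by gcongr; linarith

end

/-- For `α ∈ (0,1]`, `m ≥ 2`, and `c_{k,t} = ∏_{h=k}^t (1 - α/(m+h+1))` for `k ≤ t`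
(and `c_{t+1,t} = 1`), one has `sup_{t ≥ k} |c_{k,t}/(k/t)^α - 1| → 0` as `k → ∞`. -/
theorem stmt_2 (α : ℝ) (hα0 : 0 < α) (hα1 : α ≤ 1) (m : ℕ) (hm : 2 ≤ m) :
    Tendsto (fun k : ℕ =>
        ⨆ t : {t : ℕ // k ≤ t},
          |(∏ h ∈ Finset.Icc k (t : ℕ), (1 - α / ((m : ℝ) + h + 1))) /
              ((k : ℝ) / ((t : ℕ) : ℝ)) ^ α - 1|)
      atTop (nhds 0) := by
  have hm' : (0 : ℝ) < m := by exact_mod_cast (by omega : 0 < m)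
  refine squeeze_zero' (Eventually.of_forall fun k ↦ Real.iSup_nonneg fun _ ↦ abs_nonneg _) ?_
    (tendsto_const_div_atTop_nhds_zero_nat ((m : ℝ) + 1))
  filter_upwards [eventually_gt_atTop 0] with k hk
  exact Real.iSup_le (fun t ↦ abs_prod_Icc_one_sub_div_div_rpow_sub_one_le hα0.le hα1 hm' hk t.2)
    (by positivity)
end

section
/- Let (G_k) be an increasing filtration and (Y_k) a G-adapted sequence of square-integrable real random variables such that E[Y_k | G_{k-1}] → Y almost surely for some real random variable Y. Let (a_k), (b_k) be strictly positive reals with b_k ↑ ∞ and ∑_k E[Y_k²]/(a_k² b_k²) < ∞. If (1/b_t) ∑_{k=1}^{t} 1/a_k → γ for some constant γ, then (1/b_t) ∑_{k=1}^{t} Y_k/a_k → γ·Y almost surely. -/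
/-!
Write `Y k = Z (k - 1) + D k` with `Z (k - 1) = E[Y k | 𝒢 (k - 1)]`. The innovations
`D k / (a k * b k)` are martingale differences with second moments at most
`E[(Y k)²] / (a k² * b k²)`, so their partial sums form an `L²`-bounded martingale, which
converges a.s.; Kronecker's lemma then gives `(1 / b t) * ∑ D k / a k → 0`. The predictable part
`(1 / b t) * ∑ Z (k - 1) / a k` tends to `γ * Ylim` by the Toeplitz lemma with weights `1 / a k`.
-/

open Filter Finset MeasureTheory Topology

theorem Finset.sum_Icc_one_eq_sum_range {M : Type*} [AddCommMonoid M] (f : ℕ → M) (t : ℕ) :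
    ∑ k ∈ Icc 1 t, f k = ∑ k ∈ range t, f (k + 1) := by
  rw [← Finset.Ico_add_one_right_eq_Icc, Finset.sum_Ico_eq_sum_range]
  simp [add_comm]

theorem tendsto_sum_mul_div_of_tendsto_zero {w B x : ℕ → ℝ} (hw : ∀ k, 0 ≤ w k)
    (hB : Tendsto B atTop atTop)
    (hwB : IsBoundedUnder (· ≤ ·) atTop fun t => (∑ k ∈ Icc 1 t, w k) / B t)
    (hx : Tendsto x atTop (𝓝 0)) :
    Tendsto (fun t => (∑ k ∈ Icc 1 t, w k * x k) / B t) atTop (𝓝 0) := by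
  obtain ⟨C, hC⟩ := hwB
  rw [Metric.tendsto_nhds]
  intro ε hε
  set δ := ε / (2 * (|C| + 1))
  have hδ : 0 < δ := by positivity
  obtain ⟨N, hN⟩ := eventually_atTop.1 (hx.eventually (Metric.closedBall_mem_nhds 0 hδ))
  have head : Tendsto (fun t => |∑ k ∈ Icc 1 N, w k * x k| / B t) atTop (𝓝 0) :=
    tendsto_const_nhds.div_atTop hB
  filter_upwards [hB.eventually_gt_atTop 0, hC, head.eventually_lt_const (half_pos hε),
    eventually_ge_atTop N] with t hBt hCt hhead hNt
  have tail : |∑ k ∈ Ioc N t, w k * x k| ≤ δ * ∑ k ∈ Icc 1 t, w k := by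
    calc |∑ k ∈ Ioc N t, w k * x k| ≤ ∑ k ∈ Ioc N t, δ * w k := by
          refine (abs_sum_le_sum_abs _ _).trans (sum_le_sum fun k hk => ?_)
          rw [abs_mul, abs_of_nonneg (hw k), mul_comm]
          exact mul_le_mul_of_nonneg_right (by simpa using hN k (mem_Ioc.1 hk).1.le) (hw k)
      _ ≤ δ * ∑ k ∈ Icc 1 t, w k := by
          rw [← mul_sum]
          exact mul_le_mul_of_nonneg_left
            (sum_le_sum_of_subset_of_nonneg (Ioc_subset_Ioc_left N.zero_le) fun k _ _ => hw k) hδ.le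
  have hsplit : ∑ k ∈ Icc 1 t, w k * x k = ∑ k ∈ Icc 1 N, w k * x k + ∑ k ∈ Ioc N t, w k * x k :=
    (sum_Ioc_consecutive _ N.zero_le hNt).symm
  have hδC : δ * ((∑ k ∈ Icc 1 t, w k) / B t) < ε / 2 := by
    calc δ * ((∑ k ∈ Icc 1 t, w k) / B t) ≤ δ * |C| := by gcongr; exact hCt.trans (le_abs_self C)
      _ < δ * (|C| + 1) := by gcongr; linarith
      _ = ε / 2 := by simp only [δ]; field_simp
  rw [Real.dist_0_eq_abs, abs_div, abs_of_pos hBt, hsplit]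
  calc |∑ k ∈ Icc 1 N, w k * x k + ∑ k ∈ Ioc N t, w k * x k| / B t
      ≤ |∑ k ∈ Icc 1 N, w k * x k| / B t + δ * ((∑ k ∈ Icc 1 t, w k) / B t) := by
        rw [mul_div_assoc', ← add_div]
        gcongr
        exact (abs_add_le _ _).trans (by gcongr)
    _ < ε := by linarith

/-- Toeplitz's lemma. -/
theorem tendsto_sum_mul_div_of_tendsto {w B x : ℕ → ℝ} {γ L : ℝ} (hw : ∀ k, 0 ≤ w k)
    (hB : Tendsto B atTop atTop)
    (hwB : Tendsto (fun t => (∑ k ∈ Icc 1 t, w k) / B t) atTop (𝓝 γ))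
    (hx : Tendsto x atTop (𝓝 L)) :
    Tendsto (fun t => (∑ k ∈ Icc 1 t, w k * x k) / B t) atTop (𝓝 (γ * L)) := by
  have hcentered := tendsto_sum_mul_div_of_tendsto_zero hw hB hwB.isBoundedUnder_le
    (tendsto_sub_nhds_zero_iff.2 hx)
  have hsplit : ∀ t, (∑ k ∈ Icc 1 t, w k * x k) / B t
      = (∑ k ∈ Icc 1 t, w k * (x k - L)) / B t + (∑ k ∈ Icc 1 t, w k) / B t * L := by
    intro t
    simp only [mul_sub, sum_sub_distrib, ← sum_mul]
    ring
  simpa [hsplit] using hcentered.add (hwB.mul_const L)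

theorem sum_Icc_one_sub_pred (b : ℕ → ℝ) (t : ℕ) : ∑ k ∈ Icc 1 t, (b k - b (k - 1)) = b t - b 0 := by
  rw [sum_Icc_one_eq_sum_range]
  exact sum_range_sub b t

theorem sum_Icc_one_eq_mul_sub_sum {b : ℕ → ℝ} (hb : ∀ k, b k ≠ 0) (x : ℕ → ℝ) (t : ℕ) :
    ∑ k ∈ Icc 1 t, x k = b t * ∑ k ∈ Icc 1 t, x k / b k
      - ∑ k ∈ Icc 1 t, (b k - b (k - 1)) * ∑ j ∈ Icc 1 (k - 1), x j / b j := by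
  induction t with
  | zero => simp
  | succ t ih =>
    simp only [sum_Icc_succ_top (Nat.le_add_left 1 t), ih, Nat.add_sub_cancel]
    field_simp [hb (t + 1)]
    ring

/-- Kronecker's lemma. -/
theorem tendsto_sum_div_of_tendsto_sum_div {b x : ℕ → ℝ} {S : ℝ} (hb : ∀ k, 0 < b k)
    (hbm : Monotone b) (hbt : Tendsto b atTop atTop)
    (hS : Tendsto (fun t => ∑ k ∈ Icc 1 t, x k / b k) atTop (𝓝 S)) :
    Tendsto (fun t => (∑ k ∈ Icc 1 t, x k) / b t) atTop (𝓝 0) := by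
  have hincr : ∀ k, 0 ≤ b k - b (k - 1) := fun k => sub_nonneg.2 (hbm (Nat.sub_le k 1))
  have hratio : Tendsto (fun t => (∑ k ∈ Icc 1 t, (b k - b (k - 1))) / b t) atTop (𝓝 1) := by
    have : Tendsto (fun t => 1 - b 0 / b t) atTop (𝓝 (1 - 0)) :=
      tendsto_const_nhds.sub (tendsto_const_nhds.div_atTop hbt)
    refine (sub_zero (1 : ℝ) ▸ this).congr fun t => ?_
    rw [sum_Icc_one_sub_pred, sub_div, div_self (hb t).ne']
  have hmean := tendsto_sum_mul_div_of_tendsto hincr hbt hratio (hS.comp (tendsto_sub_atTop_nat 1))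
  have habel : ∀ t, (∑ k ∈ Icc 1 t, x k) / b t = ∑ k ∈ Icc 1 t, x k / b k
      - (∑ k ∈ Icc 1 t, (b k - b (k - 1)) * ∑ j ∈ Icc 1 (k - 1), x j / b j) / b t := by
    intro t
    rw [sum_Icc_one_eq_mul_sub_sum (fun k => (hb k).ne'), sub_div,
      mul_div_cancel_left₀ _ (hb t).ne']
  simpa [habel] using hS.sub hmean

theorem tendsto_inv_mul_sum_div_of_tendsto {a b y z : ℕ → ℝ} {γ L l : ℝ} (ha : ∀ k, 0 < a k)
    (hb : ∀ k, 0 < b k) (hbm : Monotone b) (hbt : Tendsto b atTop atTop)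
    (hnorm : Tendsto (fun t => (1 / b t) * ∑ k ∈ Icc 1 t, 1 / a k) atTop (𝓝 γ))
    (hz : Tendsto z atTop (𝓝 L))
    (hl : Tendsto (fun t => ∑ k ∈ range t, (a (k + 1) * b (k + 1))⁻¹ * (y (k + 1) - z k))
      atTop (𝓝 l)) :
    Tendsto (fun t => (1 / b t) * ∑ k ∈ Icc 1 t, y k / a k) atTop (𝓝 (γ * L)) := by
  have hinnov : Tendsto (fun t => (∑ k ∈ Icc 1 t, (y k - z (k - 1)) / a k) / b t) atTop (𝓝 0) := by
    refine tendsto_sum_div_of_tendsto_sum_div hb hbm hbt (hl.congr fun t => ?_)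
    rw [sum_Icc_one_eq_sum_range]
    refine sum_congr rfl fun k _ => ?_
    simp only [Nat.add_sub_cancel]
    field_simp
  have hpred : Tendsto (fun t => (∑ k ∈ Icc 1 t, 1 / a k * z (k - 1)) / b t) atTop (𝓝 (γ * L)) :=
    tendsto_sum_mul_div_of_tendsto (fun k => (one_div_pos.2 (ha k)).le) hbt
      (by simpa only [one_div_mul_eq_div] using hnorm) (hz.comp (tendsto_sub_atTop_nat 1))
  refine (zero_add (γ * L) ▸ hinnov.add hpred).congr fun t => ?_
  rw [← add_div, ← sum_add_distrib, one_div_mul_eq_div]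
  congr 1
  refine sum_congr rfl fun k _ => ?_
  ring

section MartingaleDifferences

open ProbabilityTheory

variable {Ω : Type*} {m m0 : MeasurableSpace Ω} {P : Measure Ω}

theorem integral_mul_eq_zero_of_condExp_ae_eq_zero [IsFiniteMeasure P] (hm : m ≤ m0)
    {f g : Ω → ℝ} (hf : StronglyMeasurable[m] f) (hf2 : MemLp f 2 P) (hg2 : MemLp g 2 P)
    (hg : P[g|m] =ᵐ[P] 0) :
    ∫ ω, f ω * g ω ∂P = 0 := by
  have hpull : P[f * g|m] =ᵐ[P] f * P[g|m] :=
    condExp_mul_of_stronglyMeasurable_left hf (hf2.integrable_mul hg2) (hg2.integrable one_le_two)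
  have hzero : P[f * g|m] =ᵐ[P] 0 := by
    filter_upwards [hpull, hg] with ω hpullω hgω
    simp [hpullω, hgω]
  calc ∫ ω, f ω * g ω ∂P = ∫ ω, (P[f * g|m]) ω ∂P := (integral_condExp hm).symm
    _ = 0 := by simp [integral_congr_ae hzero]

theorem integral_add_sq_of_integral_mul_eq_zero {f g : Ω → ℝ} (hf : MemLp f 2 P)
    (hg : MemLp g 2 P) (hfg : ∫ ω, f ω * g ω ∂P = 0) :
    ∫ ω, (f ω + g ω) ^ 2 ∂P = ∫ ω, f ω ^ 2 ∂P + ∫ ω, g ω ^ 2 ∂P := by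
  have hcross : Integrable (fun ω => 2 * (f ω * g ω)) P := (hf.integrable_mul hg).const_mul 2
  have hsq_cross : Integrable (fun ω => f ω ^ 2 + 2 * (f ω * g ω)) P :=
    hf.integrable_sq.add hcross
  simp only [add_sq, mul_assoc]
  rw [integral_add hsq_cross hg.integrable_sq,
    integral_add hf.integrable_sq hcross, integral_const_mul, hfg, mul_zero, add_zero]

theorem condExp_sub_condExp_ae_eq_zero [IsFiniteMeasure P] (hm : m ≤ m0) {f : Ω → ℝ}
    (hf : Integrable f P) :
    P[f - P[f|m]|m] =ᵐ[P] 0 := by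
  filter_upwards [condExp_sub hf (integrable_condExp (m := m) (f := f)) m] with ω hω
  simp [hω, condExp_of_stronglyMeasurable hm (stronglyMeasurable_condExp (f := f))
    integrable_condExp]

theorem integral_sub_condExp_sq_le [IsFiniteMeasure P] (hm : m ≤ m0) {f : Ω → ℝ}
    (hf : MemLp f 2 P) :
    ∫ ω, (f ω - (P[f|m]) ω) ^ 2 ∂P ≤ ∫ ω, f ω ^ 2 ∂P :=
  calc ∫ ω, (f ω - (P[f|m]) ω) ^ 2 ∂P = ∫ ω, (Var[f; P | m]) ω ∂P := by
        rw [condVar, integral_condExp hm]; rfl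
    _ ≤ ∫ ω, (P[f ^ 2|m]) ω ∂P :=
        integral_mono_ae integrable_condVar integrable_condExp (condVar_ae_le_condExp_sq hm hf)
    _ = ∫ ω, f ω ^ 2 ∂P := by rw [integral_condExp hm]; rfl

theorem Martingale.ae_tendsto_limitProcess_of_integral_sq_le [IsProbabilityMeasure P]
    {ℱ : Filtration ℕ m0} {f : ℕ → Ω → ℝ} (hf : Martingale f ℱ P) (hf2 : ∀ n, MemLp (f n) 2 P)
    {V : ℝ} (hV : ∀ n, ∫ ω, f n ω ^ 2 ∂P ≤ V) :
    ∀ᵐ ω ∂P, Tendsto (fun n => f n ω) atTop (𝓝 (ℱ.limitProcess f P ω)) := by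
  refine hf.submartingale.ae_tendsto_limitProcess (R := (1 + V).toNNReal) fun n => ?_
  have hf1 := (hf2 n).integrable one_le_two
  -- `|x| ≤ 1 + x ^ 2` turns the `L²` bound into an `L¹` bound.
  have hL1 : ∫ ω, ‖f n ω‖ ∂P ≤ 1 + V := by
    calc ∫ ω, ‖f n ω‖ ∂P ≤ ∫ ω, (1 + f n ω ^ 2) ∂P :=
          integral_mono hf1.norm ((integrable_const 1).add (hf2 n).integrable_sq) fun ω => by
            rw [Real.norm_eq_abs]
            nlinarith [sq_nonneg (|f n ω| - 1), sq_abs (f n ω), abs_nonneg (f n ω)]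
      _ ≤ 1 + V := by
          rw [integral_add (integrable_const 1) (hf2 n).integrable_sq]
          simpa using hV n
  rw [eLpNorm_one_eq_lintegral_enorm, ← ofReal_integral_norm_eq_lintegral_enorm hf1]
  exact ENNReal.ofReal_le_ofReal hL1

theorem ae_exists_tendsto_sum_of_condExp_ae_eq_zero [IsProbabilityMeasure P]
    (ℱ : Filtration ℕ m0) {d : ℕ → Ω → ℝ} (hmeas : ∀ k, StronglyMeasurable[ℱ (k + 1)] (d k))
    (hd2 : ∀ k, MemLp (d k) 2 P) (hcond : ∀ k, P[d k|ℱ k] =ᵐ[P] 0)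
    (hsum : Summable fun k => ∫ ω, d k ω ^ 2 ∂P) :
    ∀ᵐ ω ∂P, ∃ l, Tendsto (fun t => ∑ k ∈ range t, d k ω) atTop (𝓝 l) := by
  set M : ℕ → Ω → ℝ := fun t => ∑ k ∈ range t, d k
  have hM2 : ∀ t, MemLp (M t) 2 P := fun t => memLp_finsetSum' _ fun k _ => hd2 k
  have hadapted : StronglyAdapted ℱ M := fun t =>
    Finset.stronglyMeasurable_sum _ fun k hk => (hmeas k).mono (ℱ.mono (mem_range.1 hk))
  have hmart : Martingale M ℱ P :=
    martingale_of_condExp_sub_eq_zero_nat hadapted (fun t => (hM2 t).integrable one_le_two)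
      fun t => by simpa only [M, sum_range_succ_sub_sum] using hcond t
  have hsq : ∀ t, ∫ ω, M t ω ^ 2 ∂P = ∑ k ∈ range t, ∫ ω, d k ω ^ 2 ∂P := by
    intro t
    induction t with
    | zero => simp [M]
    | succ t ih =>
      have horth : ∫ ω, M t ω * d t ω ∂P = 0 :=
        integral_mul_eq_zero_of_condExp_ae_eq_zero (ℱ.le t) (hadapted t) (hM2 t) (hd2 t) (hcond t)
      have hstep : ∀ ω, M (t + 1) ω = M t ω + d t ω := fun ω => by simp [M, sum_range_succ]
      simp only [hstep]
      rw [integral_add_sq_of_integral_mul_eq_zero (hM2 t) (hd2 t) horth, ih, sum_range_succ]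
  filter_upwards [Martingale.ae_tendsto_limitProcess_of_integral_sq_le hmart hM2
    fun t => (hsq t).trans_le (hsum.sum_le_tsum _ fun k _ => integral_nonneg fun ω => sq_nonneg _)]
    with ω hω
  exact ⟨_, by simpa only [M, Finset.sum_apply] using hω⟩

end MartingaleDifferences

/-- Kronecker-type lemma (part a): if `(Y_k)` is adapted to an increasing filtration `𝒢`,
each `Y_k ∈ L²`, `E[Y_{k+1} | 𝒢_k] → Y` a.s., `(a_k), (b_k)` are strictly positive with
`b_k ↑ ∞` and `∑_k E[Y_k²]/(a_k² b_k²) < ∞`, and `(1/b_t) ∑_{k=1}^t 1/a_k → γ`, then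
`(1/b_t) ∑_{k=1}^t Y_k/a_k → γ Y` almost surely. -/
theorem stmt_3 {Ω : Type*} [m0 : MeasurableSpace Ω] (P : Measure Ω) [IsProbabilityMeasure P]
    (𝒢 : ℕ → MeasurableSpace Ω) (h𝒢le : ∀ k, 𝒢 k ≤ m0) (h𝒢mono : Monotone 𝒢)
    (Y : ℕ → Ω → ℝ) (hadp : ∀ k, StronglyMeasurable[𝒢 k] (Y k))
    (hL2 : ∀ k, MemLp (Y k) 2 P)
    (Ylim : Ω → ℝ)
    (hce : ∀ᵐ ω ∂P, Tendsto (fun k => (P[Y (k + 1)|𝒢 k]) ω) atTop (nhds (Ylim ω)))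
    (a b : ℕ → ℝ) (ha : ∀ k, 0 < a k) (hb : ∀ k, 0 < b k)
    (hbmono : Monotone b) (hbtop : Tendsto b atTop atTop)
    (hsum : Summable fun k => (∫ ω, (Y k ω) ^ 2 ∂P) / (a k ^ 2 * b k ^ 2))
    (γ : ℝ)
    (hnorm : Tendsto (fun t => (1 / b t) * ∑ k ∈ Finset.Icc 1 t, 1 / a k) atTop (nhds γ)) :
    ∀ᵐ ω ∂P, Tendsto (fun t => (1 / b t) * ∑ k ∈ Finset.Icc 1 t, Y k ω / a k)
      atTop (nhds (γ * Ylim ω)) := by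
  let ℱ : Filtration ℕ m0 := ⟨𝒢, h𝒢mono, h𝒢le⟩
  let c : ℕ → ℝ := fun k => (a (k + 1) * b (k + 1))⁻¹
  let d : ℕ → Ω → ℝ := fun k => c k • (Y (k + 1) - P[Y (k + 1)|𝒢 k])
  have hd_sq : ∀ k,
      ∫ ω, d k ω ^ 2 ∂P ≤ (∫ ω, Y (k + 1) ω ^ 2 ∂P) / (a (k + 1) ^ 2 * b (k + 1) ^ 2) := by
    intro k
    simp only [d, Pi.smul_apply, Pi.sub_apply, smul_eq_mul, mul_pow, integral_const_mul]
    rw [div_eq_inv_mul, ← mul_pow, ← inv_pow]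
    exact mul_le_mul_of_nonneg_left (integral_sub_condExp_sq_le (h𝒢le k) (hL2 (k + 1)))
      (sq_nonneg _)
  have hd : ∀ᵐ ω ∂P, ∃ l, Tendsto (fun t => ∑ k ∈ range t, d k ω) atTop (𝓝 l) := by
    refine ae_exists_tendsto_sum_of_condExp_ae_eq_zero ℱ
      (fun k => ?_) (fun k => ?_) (fun k => ?_) ?_
    · exact ((hadp (k + 1)).sub (stronglyMeasurable_condExp.mono (h𝒢mono k.le_succ))).const_smul _
    · exact ((hL2 (k + 1)).sub ((hL2 (k + 1)).condExp one_le_two)).const_smul _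
    · filter_upwards [condExp_smul (m := 𝒢 k) (μ := P) (c k) (Y (k + 1) - P[Y (k + 1)|𝒢 k]),
        condExp_sub_condExp_ae_eq_zero (h𝒢le k) ((hL2 (k + 1)).integrable one_le_two)] with ω hsmul hzero
      show P[d k|𝒢 k] ω = 0
      simp [d, hsmul, hzero]
    · exact Summable.of_nonneg_of_le (fun k => integral_nonneg fun ω => sq_nonneg _) hd_sq
        ((summable_nat_add_iff 1).2 hsum)
  filter_upwards [hce, hd] with ω hz ⟨l, hl⟩
  exact tendsto_inv_mul_sum_div_of_tendsto ha hb hbmono hbtop hnorm hz hl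
end

section
/- In the system of N interacting Pólya urns with α ∈ (0,1], the rescaled discrepancy sequence D̃_t = t^α (Z_t(j) − Z_t) is a quasi-martingale with respect to the filtration F; more precisely, E[D̃_{t+1} | F_t] − D̃_t = O(1/t²) · α D̃_t, and ∑_t E|E[D̃_{t+1} | F_t] − D̃_t| < ∞. -/
open Filter Finset MeasureTheory

/-!
Given `ℱ_t`, urn `i` receives a red ball with probability `α Z̄_t + (1 - α) Z_t(i)`, and averaging
over the urns kills the mean-field part: the discrepancy `D_t = Z_t(j) - Z̄_t` satisfies
`E[D_{t+1} | ℱ_t] = (1 - α / (m + t + 1)) D_t` exactly. Hence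
`E[D̃_{t+1} | ℱ_t] - D̃_t = c_t D_t` with `c_t = (t + 1)^α (1 - α / (m + t + 1)) - t^α`, and the tangent
line bounds of the concave function `x ↦ x^α` give `0 ≤ c_t ≤ α (m + 1) t^(α - 2)`. The series
`∑ c_t E|D_t|` converges using `|D_t| ≤ 1` when `α < 1` and `E|D_t| = O(t^(-1/2))` when `α = 1`.
-/

theorem rpow_le_tangent {v w α : ℝ} (hv : 0 < v) (hw : 0 ≤ w) (hα0 : 0 ≤ α) (hα1 : α ≤ 1) :
    w ^ α ≤ v ^ α * (1 + α * ((w - v) / v)) := by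
  have hs : -1 ≤ (w - v) / v := by rw [le_div_iff₀ hv]; linarith
  have hw' : w = v * (1 + (w - v) / v) := by field_simp; ring
  calc w ^ α = v ^ α * (1 + (w - v) / v) ^ α := by
        rw [← Real.mul_rpow hv.le (by linarith), ← hw']
    _ ≤ v ^ α * (1 + α * ((w - v) / v)) :=
        mul_le_mul_of_nonneg_left (rpow_one_add_le_one_add_mul_self hs hα0 hα1) (by positivity)

noncomputable def urnDrift (α m u : ℝ) : ℝ :=
  (u + 1) ^ α * ((m + u + 1 - α) / (m + u + 1)) - u ^ α

section urnDrift

variable {α m u : ℝ}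

theorem urnDrift_nonneg (hα0 : 0 ≤ α) (hα1 : α ≤ 1) (hm : 0 ≤ m) (hu : 0 ≤ u) :
    0 ≤ urnDrift α m u := by
  have htangent : u ^ α ≤ (u + 1) ^ α * (1 - α / (u + 1)) := by
    have := rpow_le_tangent (v := u + 1) (by linarith) hu hα0 hα1
    rwa [show α * ((u - (u + 1)) / (u + 1)) = -(α / (u + 1)) by ring, ← sub_eq_add_neg] at this
  have hratio : 1 - α / (u + 1) ≤ (m + u + 1 - α) / (m + u + 1) := by
    rw [sub_div, div_self (by linarith), sub_le_sub_iff_left]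
    exact div_le_div_of_nonneg_left hα0 (by linarith) (by linarith)
  have := mul_le_mul_of_nonneg_left hratio (by positivity : (0 : ℝ) ≤ (u + 1) ^ α)
  unfold urnDrift
  linarith

theorem urnDrift_le (hα0 : 0 ≤ α) (hα1 : α ≤ 1) (hm : 0 ≤ m) (hu : 0 < u) :
    urnDrift α m u ≤ α * (m + 1) * (u ^ α / u ^ 2) := by
  have htangent : (u + 1) ^ α ≤ u ^ α * (1 + α / u) := by
    have := rpow_le_tangent hu (by linarith : 0 ≤ u + 1) hα0 hα1
    rwa [add_sub_cancel_left, mul_one_div] at this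
  have hratio : 0 ≤ (m + u + 1 - α) / (m + u + 1) := by
    apply div_nonneg <;> linarith
  have hA : 0 < u ^ α := Real.rpow_pos_of_pos hu α
  calc urnDrift α m u
      ≤ u ^ α * (1 + α / u) * ((m + u + 1 - α) / (m + u + 1)) - u ^ α := by
        unfold urnDrift; gcongr
    _ = u ^ α * α * (m + 1 - α) / (u * (m + u + 1)) := by field_simp; ring
    _ ≤ u ^ α * α * (m + 1) / u ^ 2 := by
        apply div_le_div₀ (by positivity) (by nlinarith [mul_nonneg hA.le hα0]) (by positivity)
        nlinarith
    _ = α * (m + 1) * (u ^ α / u ^ 2) := by ring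

end urnDrift

theorem summable_of_nonneg_of_le_rpow {f : ℕ → ℝ} {c p : ℝ} (hp : p < -1)
    (hf0 : ∀ t, 0 ≤ f t) (hf : ∀ t, 1 ≤ t → f t ≤ c * (t : ℝ) ^ p) : Summable f := by
  refine (summable_nat_add_iff 1).mp (Summable.of_nonneg_of_le (fun t => hf0 (t + 1))
    (fun t => hf (t + 1) (Nat.le_add_left 1 t)) ?_)
  exact (summable_nat_add_iff 1).mpr ((Real.summable_nat_rpow.mpr hp).mul_left c)

noncomputable def discrepancy {N : ℕ} (x : Fin N → ℝ) (j : Fin N) : ℝ :=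
  x j - (∑ i, x i) / N

section discrepancy

variable {N : ℕ} (j : Fin N)

theorem abs_discrepancy_le_one {x : Fin N → ℝ} (hx : ∀ i, x i ∈ Set.Icc 0 1) :
    |discrepancy x j| ≤ 1 := by
  have hN : (0 : ℝ) < N := by exact_mod_cast j.pos
  have hsum0 : 0 ≤ (∑ i, x i) / N := div_nonneg (sum_nonneg fun i _ => (hx i).1) hN.le
  have hsum1 : (∑ i, x i) / N ≤ 1 := by
    rw [div_le_one hN]
    calc ∑ i, x i ≤ ∑ _i : Fin N, (1 : ℝ) := sum_le_sum fun i _ => (hx i).2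
      _ = N := by simp
  unfold discrepancy
  exact abs_le.mpr ⟨by linarith [(hx j).1], by linarith [(hx j).2]⟩

theorem discrepancy_step (x y : Fin N → ℝ) (c d : ℝ) :
    discrepancy (fun i => (c * x i + y i) / d) j = (c * discrepancy x j + discrepancy y j) / d := by
  simp only [discrepancy, ← sum_div, sum_add_distrib, ← mul_sum]
  ring

theorem discrepancy_mix (x : Fin N → ℝ) (α : ℝ) :
    discrepancy (fun i => α * ((∑ k, x k) / N) + (1 - α) * x i) j = (1 - α) * discrepancy x j := by
  have hN : (N : ℝ) ≠ 0 := by exact_mod_cast j.pos.ne'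
  simp only [discrepancy, sum_add_distrib, ← mul_sum, sum_const, card_univ, Fintype.card_fin,
    nsmul_eq_mul]
  field_simp
  ring

theorem condExp_discrepancy {Ω : Type*} {m m0 : MeasurableSpace Ω} {P : Measure Ω}
    {f : Fin N → Ω → ℝ} (hf : ∀ i, Integrable (f i) P) :
    P[fun ω => discrepancy (fun i => f i ω) j|m] =ᵐ[P]
      fun ω => discrepancy (fun i => P[f i|m] ω) j := by
  have hfun : (fun ω => discrepancy (fun i => f i ω) j) = f j - (N : ℝ)⁻¹ • ∑ i, f i := by
    ext ω
    simp [discrepancy, div_eq_inv_mul]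
  have hsum := condExp_finsetSum (s := univ) (fun i _ => hf i) m
  have hsmul := condExp_smul (μ := P) (N : ℝ)⁻¹ (∑ i, f i) m
  have hsub := condExp_sub (hf j) ((integrable_finsetSum' univ fun i _ => hf i).smul (N : ℝ)⁻¹) m
  rw [hfun]
  filter_upwards [hsum, hsmul, hsub] with ω hsum hsmul hsub
  simp only [hsub, Pi.sub_apply, hsmul, Pi.smul_apply, hsum, discrepancy, Finset.sum_apply,
    smul_eq_mul, div_eq_inv_mul]

end discrepancy

/-- `m` is the initial number of balls per urn and `z₀` the initial proportion of red balls; `I t i`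
indicates that a red ball is added to urn `i` at time `t`. -/
structure IsInteractingUrns {Ω : Type*} [m0 : MeasurableSpace Ω] (P : Measure Ω)
    (ℱ : ℕ → MeasurableSpace Ω) {N : ℕ} (α m z₀ : ℝ) (I Z : ℕ → Fin N → Ω → ℝ) : Prop where
  le : ∀ t, ℱ t ≤ m0
  mono : Monotone ℱ
  nonneg : 0 ≤ m
  init_mem : z₀ ∈ Set.Icc 0 1
  indicator : ∀ t i ω, I (t + 1) i ω = 0 ∨ I (t + 1) i ω = 1
  stronglyMeasurable_I : ∀ t i, StronglyMeasurable[ℱ (t + 1)] (I (t + 1) i)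
  init : ∀ i ω, Z 0 i ω = z₀
  step : ∀ t i ω, Z (t + 1) i ω = ((m + t) * Z t i ω + I (t + 1) i ω) / (m + t + 1)
  condExp_I : ∀ t i, P[I (t + 1) i|ℱ t] =ᵐ[P]
    fun ω => α * ((∑ k, Z t k ω) / N) + (1 - α) * Z t i ω

namespace IsInteractingUrns

variable {Ω : Type*} [MeasurableSpace Ω] {P : Measure Ω} {ℱ : ℕ → MeasurableSpace Ω} {N : ℕ}
  {α m z₀ : ℝ} {I Z : ℕ → Fin N → Ω → ℝ} (h : IsInteractingUrns P ℱ α m z₀ I Z)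
include h

theorem mem_Icc (t : ℕ) (i : Fin N) (ω : Ω) : Z t i ω ∈ Set.Icc 0 1 := by
  induction t generalizing i with
  | zero => exact h.init i ω ▸ h.init_mem
  | succ t ih =>
    have hmt : 0 ≤ m + t := add_nonneg h.nonneg t.cast_nonneg
    obtain ⟨hZ0, hZ1⟩ := ih i
    have hI : I (t + 1) i ω ∈ Set.Icc 0 1 := by
      rcases h.indicator t i ω with hI | hI <;> simp [hI]
    rw [h.step, Set.mem_Icc, div_le_one (by linarith), le_div_iff₀ (by linarith)]
    constructor <;> nlinarith [hI.1, hI.2]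

theorem stronglyMeasurable (t : ℕ) (i : Fin N) : StronglyMeasurable[ℱ t] (Z t i) := by
  induction t generalizing i with
  | zero =>
    rw [show Z 0 i = fun _ => z₀ from funext (h.init i)]
    exact stronglyMeasurable_const
  | succ t ih =>
    rw [show Z (t + 1) i = fun ω => ((m + t) * Z t i ω + I (t + 1) i ω) / (m + t + 1)
      from funext (h.step t i)]
    simp only [div_eq_mul_inv]
    exact ((((ih i).mono (h.mono t.le_succ)).const_mul _).add
      (h.stronglyMeasurable_I t i)).mul_const _

theorem integrable [IsFiniteMeasure P] (t : ℕ) (i : Fin N) : Integrable (Z t i) P :=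
  .of_bound ((h.stronglyMeasurable t i).mono (h.le t)).aestronglyMeasurable 1
    (ae_of_all _ fun ω => by
      rw [Real.norm_eq_abs, abs_of_nonneg (h.mem_Icc t i ω).1]; exact (h.mem_Icc t i ω).2)

theorem integrable_I [IsFiniteMeasure P] (t : ℕ) (i : Fin N) : Integrable (I (t + 1) i) P :=
  .of_bound ((h.stronglyMeasurable_I t i).mono (h.le (t + 1))).aestronglyMeasurable 1
    (ae_of_all _ fun ω => by rcases h.indicator t i ω with hI | hI <;> simp [hI])

theorem integral_abs_discrepancy_le_one [IsProbabilityMeasure P] (j : Fin N) (t : ℕ) :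
    ∫ ω, |discrepancy (Z t · ω) j| ∂P ≤ 1 := by
  have := norm_integral_le_of_norm_le_const (μ := P) (C := 1)
    (f := fun ω => |discrepancy (Z t · ω) j|) (ae_of_all _ fun ω => by
    simpa using abs_discrepancy_le_one j fun i => h.mem_Icc t i ω)
  simpa using (le_abs_self _).trans this

theorem condExp_discrepancy_succ [IsFiniteMeasure P] (j : Fin N) (t : ℕ) :
    P[fun ω => discrepancy (Z (t + 1) · ω) j|ℱ t] =ᵐ[P]
      fun ω => (m + t + 1 - α) / (m + t + 1) * discrepancy (Z t · ω) j := by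
  set X : Ω → ℝ := fun ω => discrepancy (Z t · ω) j
  set Y : Ω → ℝ := fun ω => discrepancy (I (t + 1) · ω) j
  have hXY : (fun ω => discrepancy (Z (t + 1) · ω) j) = (m + t + 1)⁻¹ • ((m + t) • X + Y) := by
    ext ω
    simp only [h.step, discrepancy_step, Pi.smul_apply, Pi.add_apply, smul_eq_mul, X, Y]
    ring
  have hX_sm : StronglyMeasurable[ℱ t] X := by
    simp only [X, discrepancy, div_eq_mul_inv]
    exact (h.stronglyMeasurable t j).sub
      ((Finset.stronglyMeasurable_fun_sum _ fun i _ => h.stronglyMeasurable t i).mul_const _)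
  have hX_int : Integrable X P := by
    simp only [X, discrepancy]
    exact (h.integrable t j).sub ((integrable_finsetSum univ fun i _ => h.integrable t i).div_const _)
  have hY_int : Integrable Y P := by
    simp only [Y, discrepancy]
    exact (h.integrable_I t j).sub
      ((integrable_finsetSum univ fun i _ => h.integrable_I t i).div_const _)
  have hX : P[(m + t) • X|ℱ t] = (m + t) • X :=
    condExp_of_stronglyMeasurable (h.le t) (hX_sm.const_smul _) (hX_int.smul _)
  have hY : P[Y|ℱ t] =ᵐ[P] (1 - α) • X := by
    filter_upwards [condExp_discrepancy j (m := ℱ t) (h.integrable_I t),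
      ae_all_iff.mpr (h.condExp_I t)] with ω hω hI
    calc P[Y|ℱ t] ω = discrepancy (fun i => P[I (t + 1) i|ℱ t] ω) j := hω
      _ = ((1 - α) • X) ω := by simp only [hI, discrepancy_mix, Pi.smul_apply, smul_eq_mul, X]
  rw [hXY]
  filter_upwards [condExp_smul (μ := P) (m + t + 1)⁻¹ ((m + t) • X + Y) (ℱ t),
    condExp_add (hX_int.smul (m + t)) hY_int (ℱ t), hY] with ω h₁ h₂ h₃
  simp only [h₁, h₂, hX, h₃, Pi.smul_apply, Pi.add_apply, smul_eq_mul]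
  field_simp
  ring

theorem condExp_rescaled_discrepancy_sub [IsFiniteMeasure P] (j : Fin N) (t : ℕ) :
    ∀ᵐ ω ∂P, P[fun ω => ((t + 1 : ℕ) : ℝ) ^ α * discrepancy (Z (t + 1) · ω) j|ℱ t] ω
      - (t : ℝ) ^ α * discrepancy (Z t · ω) j = urnDrift α m t * discrepancy (Z t · ω) j := by
  filter_upwards [condExp_smul (μ := P) (((t + 1 : ℕ) : ℝ) ^ α)
    (fun ω => discrepancy (Z (t + 1) · ω) j) (ℱ t), h.condExp_discrepancy_succ j t] with ω h₁ h₂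
  change P[((t + 1 : ℕ) : ℝ) ^ α • fun ω => discrepancy (Z (t + 1) · ω) j|ℱ t] ω - _ = _
  rw [h₁, Pi.smul_apply, h₂, smul_eq_mul, urnDrift]
  push_cast
  ring

end IsInteractingUrns

theorem stmt_9_general {Ω : Type*} [m0 : MeasurableSpace Ω] (P : Measure Ω) [IsProbabilityMeasure P]
    (α : ℝ) (hα0 : 0 < α) (hα1 : α ≤ 1)
    (N : ℕ) (a b : ℕ)
    (ℱ : ℕ → MeasurableSpace Ω) (hℱle : ∀ t, ℱ t ≤ m0) (hℱmono : Monotone ℱ)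
    (I Z : ℕ → Fin N → Ω → ℝ)
    -- each I_{t+1}(i) is an indicator, ℱ_{t+1}-measurable
    (hI01 : ∀ t i ω, I (t + 1) i ω = 0 ∨ I (t + 1) i ω = 1)
    (hImeas : ∀ t i, StronglyMeasurable[ℱ (t + 1)] (I (t + 1) i))
    -- initial composition: a red and b black balls in each urn
    (hZ0 : ∀ i ω, Z 0 i ω = (a : ℝ) / ((a : ℝ) + b))
    -- proportion dynamics
    (hZrec : ∀ t i ω, Z (t + 1) i ω =
      (((a : ℝ) + b + t) * Z t i ω + I (t + 1) i ω) / ((a : ℝ) + b + t + 1))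
    -- conditional probability of adding a red ball in urn i
    (hcond : ∀ t i, P[I (t + 1) i|ℱ t] =ᵐ[P]
      fun ω => α * ((∑ k, Z t k ω) / N) + (1 - α) * Z t i ω)
    (j : Fin N)
    (D : ℕ → Ω → ℝ) (hD : ∀ t ω, D t ω = (t : ℝ) ^ α * (Z t j ω - (∑ i, Z t i ω) / N))
    -- known fact, needed only for α = 1: E|D_t| = O(t^{-1/2})
    (hknown : α = 1 → ∃ C : ℝ, ∀ t : ℕ, 1 ≤ t →
      ∫ ω, |Z t j ω - (∑ i, Z t i ω) / N| ∂P ≤ C * ((t : ℝ) ^ (-(1 / 2 : ℝ)))) :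
    (∃ C : ℝ, 0 < C ∧ ∀ t : ℕ, 1 ≤ t → ∀ᵐ ω ∂P,
        |(P[D (t + 1)|ℱ t]) ω - D t ω| ≤ (C / (t : ℝ) ^ 2) * (α * |D t ω|)) ∧
      Summable (fun t : ℕ => ∫ ω, |(P[D (t + 1)|ℱ t]) ω - D t ω| ∂P) := by
  set m : ℝ := (a : ℝ) + b
  have hU : IsInteractingUrns P ℱ α m ((a : ℝ) / m) I Z :=
    { le := hℱle, mono := hℱmono, nonneg := by positivity,
      init_mem := ⟨by positivity, div_le_one_of_le₀ (by simp [m]) (by positivity)⟩,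
      indicator := hI01, stronglyMeasurable_I := hImeas, init := hZ0, step := hZrec,
      condExp_I := hcond }
  set X : ℕ → Ω → ℝ := fun t ω => discrepancy (Z t · ω) j
  have hDX : D = fun (t : ℕ) ω => (t : ℝ) ^ α * X t ω := funext fun t => funext fun ω => hD t ω
  have hdrift : ∀ t, ∀ᵐ ω ∂P, |P[D (t + 1)|ℱ t] ω - D t ω| = urnDrift α m t * |X t ω| := by
    intro t
    filter_upwards [hU.condExp_rescaled_discrepancy_sub j t] with ω hω
    rw [hDX, hω, abs_mul, abs_of_nonneg (urnDrift_nonneg hα0.le hα1 hU.nonneg t.cast_nonneg)]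
  refine ⟨⟨m + 1, by positivity, fun t ht => ?_⟩, ?_⟩
  · have ht0 : (0 : ℝ) < t := by exact_mod_cast ht
    filter_upwards [hdrift t] with ω hω
    rw [hω, hDX, abs_mul, abs_of_nonneg (by positivity : (0 : ℝ) ≤ (t : ℝ) ^ α)]
    calc urnDrift α m t * |X t ω| ≤ α * (m + 1) * ((t : ℝ) ^ α / (t : ℝ) ^ 2) * |X t ω| := by
          gcongr; exact urnDrift_le hα0.le hα1 hU.nonneg ht0
      _ = (m + 1) / (t : ℝ) ^ 2 * (α * ((t : ℝ) ^ α * |X t ω|)) := by ring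
  · obtain ⟨C, q, hq, hX⟩ : ∃ C q : ℝ, α - q < 1 ∧
        ∀ t : ℕ, 1 ≤ t → ∫ ω, |X t ω| ∂P ≤ C * (t : ℝ) ^ (-q) := by
      rcases hα1.lt_or_eq with hlt | heq
      · exact ⟨1, 0, by linarith, fun t _ => by simpa using hU.integral_abs_discrepancy_le_one j t⟩
      · obtain ⟨C, hC⟩ := hknown heq
        exact ⟨C, 1 / 2, by linarith, hC⟩
    refine summable_of_nonneg_of_le_rpow (c := α * (m + 1) * C) (p := α - 2 - q) (by linarith)
      (fun t => integral_nonneg fun _ => abs_nonneg _) fun t ht => ?_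
    have ht0 : (0 : ℝ) < t := by exact_mod_cast ht
    rw [integral_congr_ae (hdrift t), integral_const_mul]
    calc urnDrift α m t * ∫ ω, |X t ω| ∂P
        ≤ α * (m + 1) * ((t : ℝ) ^ α / (t : ℝ) ^ 2) * (C * (t : ℝ) ^ (-q)) :=
          mul_le_mul (urnDrift_le hα0.le hα1 hU.nonneg ht0) (hX t ht)
            (integral_nonneg fun _ => abs_nonneg _) (by positivity)
      _ = α * (m + 1) * C * (t : ℝ) ^ (α - 2 - q) := by
          rw [Real.rpow_sub ht0, Real.rpow_sub ht0, Real.rpow_neg ht0.le, Real.rpow_two]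
          ring

/-- For α ∈ (0,1], the rescaled discrepancy `D̃_t = t^α (Z_t(j) - Z̄_t)` is an
ℱ-quasi-martingale: `E[D̃_{t+1}|ℱ_t] - D̃_t = O(1/t²) α D̃_t` and
`∑_t E|E[D̃_{t+1}|ℱ_t] - D̃_t| < ∞`. (For α = 1 one uses the known fact
`E|D_t| = O(t^{-1/2})`, stated here as a hypothesis.) -/
theorem stmt_9 {Ω : Type*} [m0 : MeasurableSpace Ω] (P : Measure Ω) [IsProbabilityMeasure P]
    (α : ℝ) (hα0 : 0 < α) (hα1 : α ≤ 1)
    (N : ℕ) (hN : 1 < N) (a b : ℕ) (ha : 1 ≤ a) (hb : 1 ≤ b)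
    (ℱ : ℕ → MeasurableSpace Ω) (hℱle : ∀ t, ℱ t ≤ m0) (hℱmono : Monotone ℱ)
    (I Z : ℕ → Fin N → Ω → ℝ)
    -- each I_{t+1}(i) is an indicator, ℱ_{t+1}-measurable
    (hI01 : ∀ t i ω, I (t + 1) i ω = 0 ∨ I (t + 1) i ω = 1)
    (hImeas : ∀ t i, StronglyMeasurable[ℱ (t + 1)] (I (t + 1) i))
    -- initial composition: a red and b black balls in each urn
    (hZ0 : ∀ i ω, Z 0 i ω = (a : ℝ) / ((a : ℝ) + b))
    -- proportion dynamics
    (hZrec : ∀ t i ω, Z (t + 1) i ω =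
      (((a : ℝ) + b + t) * Z t i ω + I (t + 1) i ω) / ((a : ℝ) + b + t + 1))
    -- conditional probability of adding a red ball in urn i
    (hcond : ∀ t i, P[I (t + 1) i|ℱ t] =ᵐ[P]
      fun ω => α * ((∑ k, Z t k ω) / N) + (1 - α) * Z t i ω)
    -- conditional independence of the urns
    (hcondindep : ∀ t, ∀ i j, i ≠ j →
      P[fun ω => I (t + 1) i ω * I (t + 1) j ω|ℱ t] =ᵐ[P]
        fun ω => (α * ((∑ k, Z t k ω) / N) + (1 - α) * Z t i ω) *
          (α * ((∑ k, Z t k ω) / N) + (1 - α) * Z t j ω))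
    (j : Fin N)
    (D : ℕ → Ω → ℝ) (hD : ∀ t ω, D t ω = (t : ℝ) ^ α * (Z t j ω - (∑ i, Z t i ω) / N))
    -- known fact, needed only for α = 1: E|D_t| = O(t^{-1/2})
    (hknown : α = 1 → ∃ C : ℝ, ∀ t : ℕ, 1 ≤ t →
      ∫ ω, |Z t j ω - (∑ i, Z t i ω) / N| ∂P ≤ C * ((t : ℝ) ^ (-(1 / 2 : ℝ)))) :
    (∃ C : ℝ, 0 < C ∧ ∀ t : ℕ, 1 ≤ t → ∀ᵐ ω ∂P,
        |(P[D (t + 1)|ℱ t]) ω - D t ω| ≤ (C / (t : ℝ) ^ 2) * (α * |D t ω|)) ∧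
      Summable (fun t : ℕ => ∫ ω, |(P[D (t + 1)|ℱ t]) ω - D t ω| ∂P) :=
  stmt_9_general (m0 := m0) P α hα0 hα1 N a b ℱ hℱle hℱmono I Z hI01 hImeas hZ0 hZrec hcond j D hD
    hknown
end

section
/- For 0 < α < 1/2, in the system of N interacting Pólya urns, the moments x_t = E[|D_t|^{2+ε}] satisfy the recursion x_{t+1} = (1 − α(2+ε)/(m+t+1)) x_t + g(t) with g(t) = O(t^{-2}); consequently, for ε > 0 small enough that α(2+ε) < 1, one has E[|D_t|^{2+ε}] = O(t^{-α(2+ε)}), i.e., sup_t t^{α(2+ε)} E[|D_t|^{2+ε}] < ∞. -/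
/-!
Write `p = 2 + ε` and `b_t = 1/(m+t+1)`, so that `D_{t+1} - D_t = b_t (ξ_t - D_t)` with `ξ_t`
the innovation. The derivative `p|x|^(p-2) x` of `|x|^p` is `p(p-1)`-Lipschitz on `[-1, 1]`, so
`|D_{t+1}|^p = |D_t|^p + b_t p|D_t|^(p-2) D_t (ξ_t - D_t) + O(b_t²)`. Taking expectations, with
`E[ξ_t | ℱ_t] = (1-α) D_t` and `|x|^(p-2) x · x = |x|^p`, gives the recursion with
`g(t) = O(b_t²)`. For the decay, `y_t = t^c x_t` with `c = αp < 1` satisfies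
`y_{t+1} ≤ (1 + (m+1)/t²) y_t + O(t^(c-2))`; both perturbations are summable, so the discrete
Grönwall inequality bounds `y`.
-/

open Filter Finset MeasureTheory

theorem abs_sub_sum_div_card_le_one {N : ℕ} {a : Fin N → ℝ} (ha : ∀ i, a i ∈ Set.Icc 0 1)
    (j : Fin N) : |a j - (∑ i, a i) / N| ≤ 1 := by
  have hN : (0 : ℝ) < N := by exact_mod_cast j.pos
  have hsum : ∑ i, a i ≤ N := by
    simpa using Finset.sum_le_sum fun i (_ : i ∈ univ) => (ha i).2
  have h0 : 0 ≤ (∑ i, a i) / N := div_nonneg (sum_nonneg fun i _ => (ha i).1) hN.le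
  have h1 : (∑ i, a i) / N ≤ 1 := (div_le_one hN).2 hsum
  exact abs_le.2 ⟨by linarith [(ha j).1], by linarith [(ha j).2]⟩

theorem Convex.abs_sub_sub_deriv_mul_le {f f' : ℝ → ℝ} {s : Set ℝ} {K : NNReal}
    (hs : Convex ℝ s) (hf : ∀ x ∈ s, HasDerivWithinAt f (f' x) s x)
    (hf' : LipschitzOnWith K f' s) {x y : ℝ}
    (hx : x ∈ s) (hy : y ∈ s) :
    |f y - f x - f' x * (y - x)| ≤ K * (y - x) ^ 2 := by
  have hmvt := (hs.inter (convex_uIcc x y)).norm_image_sub_le_of_norm_hasDerivWithin_le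
    (f := fun z => f z - f' x * z) (f' := fun z => f' z - f' x) (C := K * |y - x|)
    (fun z hz => ((hf z hz.1).mono Set.inter_subset_left).sub
      (((hasDerivWithinAt_id z _).const_mul (f' x)).congr_deriv (mul_one _)))
    (fun z hz => by
      rw [Real.norm_eq_abs, ← Real.dist_eq, ← Real.dist_eq]
      exact (hf'.dist_le_mul z hz.1 x hx).trans
        (mul_le_mul_of_nonneg_left (Set.abs_sub_left_of_mem_uIcc hz.2) K.2))
    ⟨hx, Set.left_mem_uIcc⟩ ⟨hy, Set.right_mem_uIcc⟩
  simp only [Real.norm_eq_abs] at hmvt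
  calc |f y - f x - f' x * (y - x)| = |f y - f' x * y - (f x - f' x * x)| := by ring_nf
    _ ≤ K * |y - x| * |y - x| := hmvt
    _ = K * (y - x) ^ 2 := by rw [mul_assoc, abs_mul_abs_self, sq]

theorem hasDerivAt_abs_rpow_mul_self {q : ℝ} (hq : 0 < q) (x : ℝ) :
    HasDerivAt (fun x => |x| ^ q * x) ((q + 1) * |x| ^ q) x := by
  rcases eq_or_ne x 0 with rfl | hx
  · rw [abs_zero, Real.zero_rpow hq.ne', mul_zero]
    refine .of_isLittleO ?_
    have hlim : Tendsto (fun x : ℝ => |x| ^ q) (nhds 0) (nhds 0) := by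
      simpa [Real.zero_rpow hq.ne'] using
        (continuous_abs.rpow_const fun _ => Or.inr hq.le).tendsto (0 : ℝ)
    simpa using ((Asymptotics.isLittleO_one_iff ℝ).2 hlim).mul_isBigO
      (Asymptotics.isBigO_refl (fun x : ℝ => x) (nhds 0))
  · refine (((hasDerivAt_abs hx).rpow_const (p := q) (Or.inl (abs_ne_zero.2 hx))).mul
      (hasDerivAt_id' x)).congr_deriv ?_
    rw [Real.rpow_sub_one (abs_ne_zero.2 hx)]
    field_simp
    linear_combination q * sign_mul_self x

theorem lipschitzOnWith_abs_rpow_deriv {p : ℝ} (hp : 2 < p) :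
    LipschitzOnWith (Real.toNNReal (p * (p - 1))) (fun x => p * |x| ^ (p - 2) * x)
      (Set.Icc (-1) 1) := by
  have hq : 0 < p - 2 := by linarith
  refine (convex_Icc _ _).lipschitzOnWith_of_nnnorm_hasDerivWithin_le
    (f' := fun x => p * ((p - 2 + 1) * |x| ^ (p - 2))) (fun x _ => ?_) fun x hx => ?_
  · simpa only [mul_assoc] using
      ((hasDerivAt_abs_rpow_mul_self hq x).const_mul p).hasDerivWithinAt
  · rw [← NNReal.coe_le_coe, coe_nnnorm, Real.coe_toNNReal _ (by nlinarith), Real.norm_eq_abs,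
      abs_of_nonneg (by positivity), show p - 2 + 1 = p - 1 by ring, ← mul_assoc]
    exact mul_le_of_le_one_right (by nlinarith)
      (Real.rpow_le_one (abs_nonneg x) (abs_le.2 hx) hq.le)

theorem abs_rpow_sub_sub_deriv_mul_le {p x y : ℝ} (hp : 2 < p) (hx : |x| ≤ 1) (hy : |y| ≤ 1) :
    |(|y| ^ p - |x| ^ p - p * |x| ^ (p - 2) * x * (y - x))| ≤ p * (p - 1) * (y - x) ^ 2 := by
  have h := (convex_Icc (-1 : ℝ) 1).abs_sub_sub_deriv_mul_le
    (fun z _ => (hasDerivAt_abs_rpow z (by linarith : 1 < p)).hasDerivWithinAt)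
    (lipschitzOnWith_abs_rpow_deriv hp) (abs_le.1 hx) (abs_le.1 hy)
  rwa [Real.coe_toNNReal _ (by nlinarith)] at h

theorem abs_rpow_sub_two_mul_self_mul_self {p : ℝ} (hp : p ≠ 0) (x : ℝ) :
    |x| ^ (p - 2) * x * x = |x| ^ p := by
  rw [mul_assoc, ← abs_mul_abs_self, ← sq, ← Real.rpow_natCast, Nat.cast_ofNat,
    ← Real.rpow_add' (abs_nonneg x) (by simpa using hp), sub_add_cancel]

theorem abs_abs_rpow_deriv_le {p x : ℝ} (hp : 2 ≤ p) (hx : |x| ≤ 1) :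
    |p * |x| ^ (p - 2) * x| ≤ p := by
  rw [abs_mul, abs_mul, abs_of_nonneg (Real.rpow_nonneg (abs_nonneg _) _),
    abs_of_nonneg (by linarith : 0 ≤ p), mul_assoc]
  exact mul_le_of_le_one_right (by linarith) (mul_le_one₀
    (Real.rpow_le_one (abs_nonneg _) hx (by linarith : 0 ≤ p - 2)) (abs_nonneg _) hx)

theorem abs_rpow_sub_sub_deriv_mul_le_of_eq_mul {p b x y z : ℝ} (hp : 2 < p) (hx : |x| ≤ 1)
    (hy : |y| ≤ 1) (hz : |z| ≤ 1) (hyx : y - x = b * (z - x)) :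
    |(|y| ^ p - |x| ^ p - p * |x| ^ (p - 2) * x * (y - x))| ≤ 4 * p * (p - 1) * b ^ 2 := by
  refine (abs_rpow_sub_sub_deriv_mul_le hp hx hy).trans ?_
  have hzx : (z - x) ^ 2 ≤ 2 ^ 2 :=
    sq_le_sq' (by linarith [abs_le.1 hx, abs_le.1 hz]) (by linarith [abs_le.1 hx, abs_le.1 hz])
  rw [hyx, mul_pow]
  nlinarith [mul_le_mul_of_nonneg_left (mul_le_mul_of_nonneg_left hzx (sq_nonneg b))
    (by nlinarith : 0 ≤ p * (p - 1))]

theorem continuous_abs_rpow_deriv {p : ℝ} (hp : 2 ≤ p) :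
    Continuous fun x : ℝ => p * |x| ^ (p - 2) * x :=
  (continuous_const.mul (continuous_abs.rpow_const fun _ => Or.inr (by linarith))).mul
    continuous_id

section OneStep

variable {Ω : Type*} {F m0 : MeasurableSpace Ω} {P : Measure Ω} {X Y ξ : Ω → ℝ}
  {α b p : ℝ}

theorem integral_abs_rpow_deriv_mul_self (hp : p ≠ 0) :
    ∫ ω, p * |X ω| ^ (p - 2) * X ω * X ω ∂P = p * ∫ ω, |X ω| ^ p ∂P := by
  rw [← integral_const_mul]
  congr with ω
  rw [← abs_rpow_sub_two_mul_self_mul_self hp]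
  ring

theorem integral_abs_rpow_deriv_mul_eq [IsFiniteMeasure P] (hF : F ≤ m0) (hp : 2 ≤ p)
    (hX : StronglyMeasurable[F] X) (hX1 : ∀ ω, |X ω| ≤ 1) (hξ : Integrable ξ P)
    (hcond : P[ξ|F] =ᵐ[P] fun ω => (1 - α) * X ω) :
    ∫ ω, p * |X ω| ^ (p - 2) * X ω * ξ ω ∂P = (1 - α) * p * ∫ ω, |X ω| ^ p ∂P := by
  set H : Ω → ℝ := fun ω => p * |X ω| ^ (p - 2) * X ω
  have hH : StronglyMeasurable[F] H :=
    (continuous_abs_rpow_deriv hp).comp_stronglyMeasurable hX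
  calc ∫ ω, H ω * ξ ω ∂P = ∫ ω, (P[H * ξ|F]) ω ∂P := (integral_condExp hF).symm
    _ = ∫ ω, (1 - α) * (H ω * X ω) ∂P := by
      refine integral_congr_ae ?_
      filter_upwards [condExp_stronglyMeasurable_mul_of_bound hF hH hξ p
        (.of_forall fun ω => abs_abs_rpow_deriv_le hp (hX1 ω)), hcond] with ω h1 h2
      rw [h1, Pi.mul_apply, h2]
      ring
    _ = (1 - α) * p * ∫ ω, |X ω| ^ p ∂P := by
      rw [integral_const_mul, integral_abs_rpow_deriv_mul_self (by linarith), mul_assoc]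

theorem integral_abs_rpow_deriv_mul_sub_eq [IsFiniteMeasure P] (hF : F ≤ m0) (hp : 2 ≤ p)
    (hX : StronglyMeasurable[F] X) (hξ : AEStronglyMeasurable ξ P) (hX1 : ∀ ω, |X ω| ≤ 1)
    (hξ1 : ∀ ω, |ξ ω| ≤ 1) (hYX : ∀ ω, Y ω - X ω = b * (ξ ω - X ω))
    (hcond : P[ξ|F] =ᵐ[P] fun ω => (1 - α) * X ω) :
    ∫ ω, p * |X ω| ^ (p - 2) * X ω * (Y ω - X ω) ∂P =
      -(α * p * b) * ∫ ω, |X ω| ^ p ∂P := by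
  set H : Ω → ℝ := fun ω => p * |X ω| ^ (p - 2) * X ω
  have hX' : AEStronglyMeasurable X P := (hX.mono hF).aestronglyMeasurable
  have hH : AEStronglyMeasurable H P :=
    (continuous_abs_rpow_deriv hp).comp_aestronglyMeasurable hX'
  have hHmul : ∀ {Z : Ω → ℝ}, Integrable Z P →
      Integrable (fun ω => b * (H ω * Z ω)) P :=
    fun hZ => (hZ.bdd_mul hH (.of_forall fun ω =>
      (Real.norm_eq_abs _).trans_le (abs_abs_rpow_deriv_le hp (hX1 ω)))).const_mul b
  have hξint : Integrable ξ P := .of_bound hξ 1 (.of_forall hξ1)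
  calc ∫ ω, H ω * (Y ω - X ω) ∂P
        = ∫ ω, (b * (H ω * ξ ω) - b * (H ω * X ω)) ∂P := by
        congr with ω
        rw [hYX]
        ring
    _ = b * ∫ ω, H ω * ξ ω ∂P - b * ∫ ω, H ω * X ω ∂P := by
        rw [integral_sub (hHmul hξint) (hHmul (.of_bound hX' 1 (.of_forall hX1))),
          integral_const_mul, integral_const_mul]
    _ = -(α * p * b) * ∫ ω, |X ω| ^ p ∂P := by
        rw [integral_abs_rpow_deriv_mul_eq hF hp hX hX1 hξint hcond,
          integral_abs_rpow_deriv_mul_self (by linarith)]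
        ring

theorem abs_integral_abs_rpow_sub_le [IsProbabilityMeasure P] (hF : F ≤ m0) (hp : 2 < p)
    (hX : StronglyMeasurable[F] X) (hY : AEStronglyMeasurable Y P)
    (hξ : AEStronglyMeasurable ξ P) (hX1 : ∀ ω, |X ω| ≤ 1) (hY1 : ∀ ω, |Y ω| ≤ 1)
    (hξ1 : ∀ ω, |ξ ω| ≤ 1) (hYX : ∀ ω, Y ω - X ω = b * (ξ ω - X ω))
    (hcond : P[ξ|F] =ᵐ[P] fun ω => (1 - α) * X ω) :
    |∫ ω, |Y ω| ^ p ∂P - (1 - α * p * b) * ∫ ω, |X ω| ^ p ∂P| ≤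
      4 * p * (p - 1) * b ^ 2 := by
  set H : Ω → ℝ := fun ω => p * |X ω| ^ (p - 2) * X ω
  have hX' : AEStronglyMeasurable X P := (hX.mono hF).aestronglyMeasurable
  have hpow : ∀ {Z : Ω → ℝ}, AEStronglyMeasurable Z P → (∀ ω, |Z ω| ≤ 1) →
      Integrable (fun ω => |Z ω| ^ p) P := fun hZ hZ1 =>
    .of_bound ((continuous_abs.rpow_const fun _ => Or.inr (by linarith)).comp_aestronglyMeasurable
      hZ) 1 (.of_forall fun ω => by
        rw [Real.norm_eq_abs, abs_of_nonneg (by positivity)]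
        exact Real.rpow_le_one (abs_nonneg _) (hZ1 ω) (by linarith))
  have hHmul : Integrable (fun ω => H ω * (Y ω - X ω)) P :=
    (Integrable.of_bound (hY.sub hX') 2 (.of_forall fun ω =>
      (abs_sub _ _).trans (by linarith [hY1 ω, hX1 ω]))).bdd_mul
    ((continuous_abs_rpow_deriv hp.le).comp_aestronglyMeasurable hX')
    (.of_forall fun ω => (Real.norm_eq_abs _).trans_le (abs_abs_rpow_deriv_le hp.le (hX1 ω)))
  have hsplit : ∫ ω, |Y ω| ^ p ∂P - (1 - α * p * b) * ∫ ω, |X ω| ^ p ∂P =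
      ∫ ω, (|Y ω| ^ p - |X ω| ^ p - H ω * (Y ω - X ω)) ∂P := by
    rw [integral_sub (f := fun ω => |Y ω| ^ p - |X ω| ^ p)
        ((hpow hY hY1).sub (hpow hX' hX1)) hHmul,
      integral_sub (hpow hY hY1) (hpow hX' hX1),
      integral_abs_rpow_deriv_mul_sub_eq hF hp.le hX hξ hX1 hξ1 hYX hcond]
    ring
  rw [hsplit, ← Real.norm_eq_abs]
  simpa using norm_integral_le_of_norm_le_const (μ := P) (.of_forall fun ω =>
    (Real.norm_eq_abs _).trans_le
      (abs_rpow_sub_sub_deriv_mul_le_of_eq_mul hp (hX1 ω) (hY1 ω) (hξ1 ω) (hYX ω)))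

end OneStep

theorem add_one_rpow_le_rpow_mul {t c : ℝ} (ht : 0 < t) (hc0 : 0 ≤ c) (hc1 : c ≤ 1) :
    (t + 1) ^ c ≤ t ^ c * (1 + c / t) := by
  have h : t + 1 = t * (1 + 1 / t) := by field_simp
  rw [h, Real.mul_rpow ht.le (by positivity), div_eq_mul_one_div c]
  exact mul_le_mul_of_nonneg_left
    (rpow_one_add_le_one_add_mul_self (by linarith [one_div_pos.2 ht]) hc0 hc1) (by positivity)

theorem one_add_div_mul_one_sub_div_le {t c m : ℝ} (ht : 0 < t) (hc0 : 0 ≤ c) (hc1 : c ≤ 1)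
    (hm : 0 ≤ m) : (1 + c / t) * (1 - c / (m + t + 1)) ≤ 1 + (m + 1) / t ^ 2 := by
  have hs : 0 < m + t + 1 := by linarith
  rw [show (1 + c / t) * (1 - c / (m + t + 1)) = 1 + c * (m + 1 - c) / (t * (m + t + 1)) by
    field_simp; ring]
  gcongr 1 + ?_
  rw [div_le_div_iff₀ (by positivity) (by positivity)]
  have : c * (m + 1 - c) ≤ m + 1 := by nlinarith
  nlinarith [mul_le_mul_of_nonneg_right this (sq_nonneg t),
    mul_nonneg (mul_nonneg ht.le (by linarith : 0 ≤ m + 1)) (by linarith : 0 ≤ m + 1)]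

theorem exists_le_mul_rpow_neg_of_le_one_sub_div {m c K : ℝ} (hm : 0 ≤ m) (hc0 : 0 ≤ c)
    (hc1 : c < 1) (hK : 0 ≤ K) {x : ℕ → ℝ} (hx : ∀ t, 0 ≤ x t)
    (hrec : ∀ t : ℕ, 1 ≤ t →
      x (t + 1) ≤ (1 - c / (m + t + 1)) * x t + K / (t : ℝ) ^ 2) :
    ∃ C, ∀ t : ℕ, 1 ≤ t → x t ≤ C * (t : ℝ) ^ (-c) := by
  set y : ℕ → ℝ := fun t => (t : ℝ) ^ c * x t
  set a : ℕ → ℝ := fun t => (m + 1) / (t : ℝ) ^ 2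
  set b : ℕ → ℝ := fun t => 2 * K * (t : ℝ) ^ (c - 2)
  have ha : Summable a := (Real.summable_one_div_nat_pow.2 one_lt_two).mul_left (m + 1) |>.congr
    fun t => by simp [a, div_eq_mul_one_div (m + 1)]
  have hb : Summable b := (Real.summable_nat_rpow.2 (by linarith)).mul_left (2 * K)
  have hy : ∀ t ≥ 1, y (t + 1) ≤ (1 + a t) * y t + b t := by
    intro t ht
    have ht0 : (0 : ℝ) < t := by exact_mod_cast ht
    have hbern := add_one_rpow_le_rpow_mul ht0 hc0 hc1.le
    have hfac := one_add_div_mul_one_sub_div_le ht0 hc0 hc1.le hm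
    have hpow : (t : ℝ) ^ c / (t : ℝ) ^ 2 = (t : ℝ) ^ (c - 2) := by
      rw [Real.rpow_sub ht0, Real.rpow_two]
    have h2 : ((t : ℝ) + 1) ^ c ≤ 2 * (t : ℝ) ^ c := by
      have : c / t ≤ 1 :=
        (div_le_one ht0).2 (by linarith [show (1 : ℝ) ≤ t by exact_mod_cast ht])
      nlinarith [Real.rpow_nonneg ht0.le c]
    have hnn : 0 ≤ 1 - c / (m + t + 1) := by
      rw [sub_nonneg, div_le_one (by linarith)]; linarith
    calc y (t + 1) = ((t : ℝ) + 1) ^ c * x (t + 1) := by simp [y]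
      _ ≤ ((t : ℝ) + 1) ^ c * ((1 - c / (m + t + 1)) * x t + K / (t : ℝ) ^ 2) :=
          mul_le_mul_of_nonneg_left (hrec t ht) (by positivity)
      _ ≤ (t : ℝ) ^ c * (1 + c / t) * ((1 - c / (m + t + 1)) * x t)
            + 2 * (t : ℝ) ^ c * (K / (t : ℝ) ^ 2) := by
          rw [mul_add]
          gcongr
          · exact mul_nonneg hnn (hx t)
      _ = (1 + c / t) * (1 - c / (m + t + 1)) * y t + b t := by
          simp only [y, b, ← hpow]
          ring
      _ ≤ (1 + a t) * y t + b t := by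
          gcongr
          exact mul_nonneg (Real.rpow_nonneg ht0.le c) (hx t)
  refine ⟨(y 1 + ∑' t, b t) * Real.exp (∑' t, a t), fun t ht => ?_⟩
  have hgron := discrete_gronwall (u := y) (hx 1 |>.trans_eq (by simp [y])) hy
    (fun n _ => by positivity) (fun n _ => by positivity) ht
  have ht0 : (0 : ℝ) < t := by exact_mod_cast ht
  calc x t = y t * (t : ℝ) ^ (-c) := by
        rw [mul_comm, ← mul_assoc, ← Real.rpow_add ht0, neg_add_cancel, Real.rpow_zero, one_mul]
    _ ≤ (y 1 + ∑' t, b t) * Real.exp (∑' t, a t) * (t : ℝ) ^ (-c) := by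
        refine mul_le_mul_of_nonneg_right (hgron.trans ?_) (by positivity)
        gcongr
        · exact add_nonneg (by simpa [y] using hx 1) (tsum_nonneg fun n => by positivity)
        · exact hb.sum_le_tsum _ fun n _ => by positivity
        · exact ha.sum_le_tsum _ fun n _ => by positivity

theorem stmt_10_general {Ω : Type*} [m0 : MeasurableSpace Ω] (P : Measure Ω) [IsProbabilityMeasure P]
    (N : ℕ) (m : ℕ)
    (α : ℝ) (hα0 : 0 < α)
    (ℱ : ℕ → MeasurableSpace Ω) (hℱle : ∀ t, ℱ t ≤ m0)
    (I : ℕ → Fin N → Ω → ℝ) (D : ℕ → Ω → ℝ) (j : Fin N)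
    (hI01 : ∀ t i ω, I (t + 1) i ω = 0 ∨ I (t + 1) i ω = 1)
    (hImeas : ∀ t i, StronglyMeasurable[ℱ (t + 1)] (I (t + 1) i))
    (hDmeas : ∀ t, StronglyMeasurable[ℱ t] (D t))
    (hDbd : ∀ t ω, |D t ω| ≤ 1)
    -- recursion for the discrepancy D_t = Z_t(j) - Z̄_t
    (hDrec : ∀ t ω, D (t + 1) ω = (((m : ℝ) + t) / ((m : ℝ) + t + 1)) * D t ω +
      (1 / ((m : ℝ) + t + 1)) * (I (t + 1) j ω - (∑ i, I (t + 1) i ω) / N))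
    -- conditional mean of the innovation
    (hcond : ∀ t, P[fun ω => I (t + 1) j ω - (∑ i, I (t + 1) i ω) / N|ℱ t] =ᵐ[P]
      fun ω => (1 - α) * D t ω)
    (ε : ℝ) (hε : 0 < ε) (hαε : α * (2 + ε) < 1) :
    (∃ g : ℕ → ℝ,
        (∃ C : ℝ, ∀ t : ℕ, 1 ≤ t → |g t| ≤ C / (t : ℝ) ^ 2) ∧
          ∀ t : ℕ, ∫ ω, |D (t + 1) ω| ^ (2 + ε) ∂P =
            (1 - α * (2 + ε) / ((m : ℝ) + t + 1)) * ∫ ω, |D t ω| ^ (2 + ε) ∂P + g t) ∧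
      ∃ C : ℝ, ∀ t : ℕ, 1 ≤ t →
        ∫ ω, |D t ω| ^ (2 + ε) ∂P ≤ C * (t : ℝ) ^ (-(α * (2 + ε))) := by
  set p := 2 + ε
  have hp : 2 < p := by linarith
  set x : ℕ → ℝ := fun t => ∫ ω, |D t ω| ^ p ∂P
  set K := 4 * p * (p - 1)
  have hK : 0 ≤ K := mul_nonneg (by linarith) (by linarith)
  have hstep : ∀ t : ℕ, |x (t + 1) - (1 - α * p / ((m : ℝ) + t + 1)) * x t|
      ≤ K / ((m : ℝ) + t + 1) ^ 2 := by
    intro t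
    set ξ : Ω → ℝ := fun ω => I (t + 1) j ω - (∑ i, I (t + 1) i ω) / N
    have hξ : StronglyMeasurable[ℱ (t + 1)] ξ := (hImeas t j).sub
      ((stronglyMeasurable_fun_sum univ fun i _ => hImeas t i).div stronglyMeasurable_const)
    have hξ1 : ∀ ω, |ξ ω| ≤ 1 := fun ω =>
      abs_sub_sum_div_card_le_one (a := (I (t + 1) · ω))
        (fun i => by rcases hI01 t i ω with h | h <;> simp [h]) j
    have hDD : ∀ ω, D (t + 1) ω - D t ω = 1 / ((m : ℝ) + t + 1) * (ξ ω - D t ω) := by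
      intro ω
      rw [hDrec]
      field_simp
      ring
    simpa only [mul_one_div, one_div_pow] using abs_integral_abs_rpow_sub_le (hℱle t) hp
      (hDmeas t) ((hDmeas (t + 1)).mono (hℱle _)).aestronglyMeasurable
      ((hξ.mono (hℱle _)).aestronglyMeasurable) (hDbd t) (hDbd (t + 1)) hξ1 hDD (hcond t)
  have hgK : ∀ t : ℕ, 1 ≤ t → K / ((m : ℝ) + t + 1) ^ 2 ≤ K / (t : ℝ) ^ 2 := by
    intro t ht
    have ht0 : (0 : ℝ) < t := by exact_mod_cast ht
    gcongr
    linarith [(Nat.cast_nonneg m : (0 : ℝ) ≤ m)]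
  refine ⟨⟨fun t => x (t + 1) - (1 - α * p / ((m : ℝ) + t + 1)) * x t,
    ⟨K, fun t ht => (hstep t).trans (hgK t ht)⟩, fun t => by ring⟩, ?_⟩
  exact exists_le_mul_rpow_neg_of_le_one_sub_div (Nat.cast_nonneg m) (by positivity) hαε hK
    (fun t => integral_nonneg fun ω => by positivity) fun t ht => by
      linarith [le_of_abs_le (hstep t), hgK t ht]

/-- For `0 < α < 1/2`, the moments `x_t = E[|D_t|^{2+ε}]` satisfy
`x_{t+1} = (1 - α(2+ε)/(m+t+1)) x_t + g(t)` with `g(t) = O(t^{-2})`; consequently, for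
`ε > 0` with `α(2+ε) < 1`, `E[|D_t|^{2+ε}] = O(t^{-α(2+ε)})`. -/
theorem stmt_10 {Ω : Type*} [m0 : MeasurableSpace Ω] (P : Measure Ω) [IsProbabilityMeasure P]
    (N : ℕ) (hN : 1 < N) (m : ℕ) (hm : 2 ≤ m)
    (α : ℝ) (hα0 : 0 < α) (hα12 : α < 1 / 2)
    (ℱ : ℕ → MeasurableSpace Ω) (hℱle : ∀ t, ℱ t ≤ m0) (hℱmono : Monotone ℱ)
    (I : ℕ → Fin N → Ω → ℝ) (D : ℕ → Ω → ℝ) (j : Fin N)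
    (hI01 : ∀ t i ω, I (t + 1) i ω = 0 ∨ I (t + 1) i ω = 1)
    (hImeas : ∀ t i, StronglyMeasurable[ℱ (t + 1)] (I (t + 1) i))
    (hDmeas : ∀ t, StronglyMeasurable[ℱ t] (D t))
    (hDbd : ∀ t ω, |D t ω| ≤ 1)
    -- recursion for the discrepancy D_t = Z_t(j) - Z̄_t
    (hDrec : ∀ t ω, D (t + 1) ω = (((m : ℝ) + t) / ((m : ℝ) + t + 1)) * D t ω +
      (1 / ((m : ℝ) + t + 1)) * (I (t + 1) j ω - (∑ i, I (t + 1) i ω) / N))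
    -- conditional mean of the innovation
    (hcond : ∀ t, P[fun ω => I (t + 1) j ω - (∑ i, I (t + 1) i ω) / N|ℱ t] =ᵐ[P]
      fun ω => (1 - α) * D t ω)
    (ε : ℝ) (hε : 0 < ε) (hαε : α * (2 + ε) < 1) :
    (∃ g : ℕ → ℝ,
        (∃ C : ℝ, ∀ t : ℕ, 1 ≤ t → |g t| ≤ C / (t : ℝ) ^ 2) ∧
          ∀ t : ℕ, ∫ ω, |D (t + 1) ω| ^ (2 + ε) ∂P =
            (1 - α * (2 + ε) / ((m : ℝ) + t + 1)) * ∫ ω, |D t ω| ^ (2 + ε) ∂P + g t) ∧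
      ∃ C : ℝ, ∀ t : ℕ, 1 ≤ t →
        ∫ ω, |D t ω| ^ (2 + ε) ∂P ≤ C * (t : ℝ) ^ (-(α * (2 + ε))) :=
  stmt_10_general (m0 := m0) P N m α hα0 ℱ hℱle I D j hI01 hImeas hDmeas hDbd hDrec hcond ε hε hαε
end

section
/- For 0 < α < 1/2, the sequence t^α (Z_t(j) − Z_t) converges almost surely and in L¹ to a real random variable D̃ with P(D̃ ≠ 0) > 0. -/
/-!
Write `Y_t = Z_t(j) - Z̄_t` and `β = a + b`. Averaging the drift over the urns gives
`E[Y_{t+1} | ℱ_t] = ρ_t Y_t` with `ρ_t = (β + t + 1 - α) / (β + t + 1)`, so that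
`M_t = Y_t / ∏_{s<t} ρ_s` is a martingale. By Euler's limit formula for `Γ`,
`t^α ∏_{s<t} ρ_s → κ = Γ(β + 1) / Γ(β + 1 - α)`, so the asymptotics `E[Y_t²] ~ d t^{-2α}` make `M`
bounded in `L²`, hence uniformly integrable: it converges a.s. and in `L¹` to some `M_∞`, and
`t^α Y_t → κ M_∞`. Finally `E[M_t²] → d / κ² ≠ 0`, so some `M_t = E[M_∞ | ℱ_t]` is not a.s. zero,
and neither is `M_∞`.
-/

open Filter Finset MeasureTheory Topology
open scoped NNReal

theorem rpow_sub_mul_prod_eq_GammaSeq_div {x y : ℝ} (hx : 0 < x) (hy : 0 < y) {n : ℕ}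
    (hn : n ≠ 0) :
    (n : ℝ) ^ (x - y) * ∏ s ∈ range n, (y + s) / (x + s) =
      Real.GammaSeq x n / Real.GammaSeq y n * ((x + n) / (y + n)) := by
  have hn' : (0 : ℝ) < n := by positivity
  have hX : 0 < ∏ s ∈ range n, (x + s) := prod_pos fun s _ => by positivity
  have hY : 0 < ∏ s ∈ range n, (y + s) := prod_pos fun s _ => by positivity
  have : (0 : ℝ) < (n : ℝ) ^ y := by positivity
  have : (0 : ℝ) < (n.factorial : ℝ) := by positivity
  rw [Real.GammaSeq, Real.GammaSeq, prod_range_succ, prod_range_succ, prod_div_distrib,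
    Real.rpow_sub hn']
  field_simp

theorem tendsto_add_natCast_div_add_natCast (x y : ℝ) :
    Tendsto (fun n : ℕ => (x + n) / (y + n)) atTop (𝓝 1) := by
  have h := ((tendsto_natCast_div_add_atTop x).inv₀ one_ne_zero).mul
    (tendsto_natCast_div_add_atTop y)
  rw [inv_one, one_mul] at h
  refine h.congr' <| (eventually_ne_atTop 0).mono fun n hn => ?_
  have : (0 : ℝ) < n := by positivity
  field_simp
  ring

theorem tendsto_rpow_sub_mul_prod_div {x y : ℝ} (hx : 0 < x) (hy : 0 < y) :
    Tendsto (fun n : ℕ => (n : ℝ) ^ (x - y) * ∏ s ∈ range n, (y + s) / (x + s)) atTop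
      (𝓝 (Real.Gamma x / Real.Gamma y)) := by
  have := ((Real.GammaSeq_tendsto_Gamma x).div (Real.GammaSeq_tendsto_Gamma y)
    (Real.Gamma_pos_of_pos hy).ne').mul (tendsto_add_natCast_div_add_natCast x y)
  rw [mul_one] at this
  exact this.congr' <| (eventually_ne_atTop 0).mono fun n hn =>
    (rpow_sub_mul_prod_eq_GammaSeq_div hx hy hn).symm

theorem tendsto_rpow_mul_prod_sub_div {β α : ℝ} (hβ : 0 < β + 1) (hα : α < β + 1) :
    Tendsto (fun t : ℕ => (t : ℝ) ^ α * ∏ s ∈ range t, (β + s + 1 - α) / (β + s + 1)) atTop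
      (𝓝 (Real.Gamma (β + 1) / Real.Gamma (β + 1 - α))) := by
  convert tendsto_rpow_sub_mul_prod_div hβ (sub_pos.2 hα) using 3 with t
  · ring_nf
  · exact prod_congr rfl fun s _ => by ring_nf

theorem uniformIntegrable_of_integral_sq_le {Ω ι : Type*} [MeasurableSpace Ω] {μ : Measure Ω}
    [IsFiniteMeasure μ] {f : ι → Ω → ℝ} (hf : ∀ i, MemLp (f i) 2 μ) {B : ℝ}
    (hB : ∀ i, ∫ x, f i x ^ 2 ∂μ ≤ B) : UniformIntegrable f 1 μ := by
  refine uniformIntegrable_of le_rfl ENNReal.one_ne_top (fun i => (hf i).1) fun ε hε => ?_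
  set C : ℝ≥0 := (B / ε).toNNReal + 1
  have hC : (0 : ℝ) < C := by positivity
  refine ⟨C, fun i => ?_⟩
  have hpt : ∀ x, ‖{x | C ≤ ‖f i x‖₊}.indicator (f i) x‖ ≤ f i x ^ 2 / C := by
    intro x
    by_cases hx : x ∈ {x | C ≤ ‖f i x‖₊}
    · rw [Set.indicator_of_mem hx, le_div_iff₀ hC, ← sq_abs, sq, ← Real.norm_eq_abs]
      exact mul_le_mul_of_nonneg_left (by exact_mod_cast hx) (norm_nonneg _)
    · rw [Set.indicator_of_notMem hx, norm_zero]
      positivity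
  have hint : Integrable (fun x => f i x ^ 2 / C) μ := (hf i).integrable_sq.div_const _
  calc eLpNorm ({x | C ≤ ‖f i x‖₊}.indicator (f i)) 1 μ
      ≤ eLpNorm (fun x => f i x ^ 2 / C) 1 μ := eLpNorm_mono_real hpt
    _ = ENNReal.ofReal (∫ x, f i x ^ 2 / C ∂μ) := by
      rw [eLpNorm_one_eq_lintegral_enorm,
        ofReal_integral_eq_lintegral_ofReal hint (ae_of_all _ fun x => by positivity)]
      exact lintegral_congr fun x => Real.enorm_of_nonneg (by positivity)
    _ ≤ ENNReal.ofReal ε := by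
      refine ENNReal.ofReal_le_ofReal ?_
      rw [integral_div, div_le_iff₀ hC]
      calc ∫ x, f i x ^ 2 ∂μ ≤ B := hB i
        _ ≤ ε * C := by
          have := Real.le_coe_toNNReal (B / ε)
          rw [div_le_iff₀ hε] at this
          change B ≤ ε * (((B / ε).toNNReal : ℝ) + 1)
          linarith

theorem tendsto_integral_abs_mul_sub_mul {Ω : Type*} [MeasurableSpace Ω] {μ : Measure Ω}
    {M : ℕ → Ω → ℝ} {G : Ω → ℝ} {r : ℕ → ℝ} {κ : ℝ} (hM : ∀ t, Integrable (M t) μ)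
    (hG : Integrable G μ) (hr : Tendsto r atTop (𝓝 κ))
    (hMG : Tendsto (fun t => eLpNorm (M t - G) 1 μ) atTop (𝓝 0)) :
    Tendsto (fun t => ∫ ω, |r t * M t ω - κ * G ω| ∂μ) atTop (𝓝 0) := by
  have hMG' : Tendsto (fun t => ∫ ω, |M t ω - G ω| ∂μ) atTop (𝓝 0) := by
    refine ((ENNReal.tendsto_toReal ENNReal.zero_ne_top).comp hMG).congr fun t => ?_
    rw [Function.comp_apply, eLpNorm_one_eq_lintegral_enorm,
      ← integral_norm_eq_lintegral_enorm ((hM t).sub hG).aestronglyMeasurable]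
    rfl
  have hbound : ∀ t, ∫ ω, |r t * M t ω - κ * G ω| ∂μ
      ≤ |r t| * ∫ ω, |M t ω - G ω| ∂μ + |r t - κ| * ∫ ω, |G ω| ∂μ := by
    intro t
    rw [← integral_const_mul, ← integral_const_mul, ← integral_add]
    · refine integral_mono (((hM t).const_mul _).sub (hG.const_mul _)).abs ?_ fun ω => ?_
      · exact (((hM t).sub hG).abs.const_mul _).add (hG.abs.const_mul _)
      · calc |r t * M t ω - κ * G ω| = |r t * (M t ω - G ω) + (r t - κ) * G ω| := by ring_nf
          _ ≤ |r t| * |M t ω - G ω| + |r t - κ| * |G ω| := by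
            rw [← abs_mul, ← abs_mul]; exact abs_add_le _ _
    · exact ((hM t).sub hG).abs.const_mul _
    · exact hG.abs.const_mul _
  have hlim : Tendsto (fun t => |r t| * ∫ ω, |M t ω - G ω| ∂μ + |r t - κ| * ∫ ω, |G ω| ∂μ)
      atTop (𝓝 0) := by
    have hrκ : Tendsto (fun t => |r t - κ|) atTop (𝓝 0) := by
      simpa using (hr.sub_const κ).abs
    simpa using (hr.abs.mul hMG').add (hrκ.mul_const _)
  exact squeeze_zero (fun t => integral_nonneg fun ω => abs_nonneg _) hbound hlim

section Martingale

variable {Ω : Type*} [m0 : MeasurableSpace Ω] {μ : Measure Ω} {F : Filtration ℕ m0}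

theorem martingale_inv_prod_mul_of_condExp_succ [IsFiniteMeasure μ] {Y : ℕ → Ω → ℝ}
    {ρ : ℕ → ℝ} (hY : StronglyAdapted F Y) (hint : ∀ t, Integrable (Y t) μ)
    (hρ : ∀ t, ρ t ≠ 0) (hdrift : ∀ t, μ[Y (t + 1)|F t] =ᵐ[μ] fun ω => ρ t * Y t ω) :
    Martingale (fun t ω => (∏ s ∈ range t, ρ s)⁻¹ * Y t ω) F μ := by
  refine martingale_nat (fun t => (hY t).const_mul _) (fun t => (hint t).const_mul _)
    fun t => ?_
  filter_upwards [condExp_smul (∏ s ∈ range (t + 1), ρ s)⁻¹ (Y (t + 1)) (F t), hdrift t]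
    with ω h1 h2
  change _ = μ[(∏ s ∈ range (t + 1), ρ s)⁻¹ • Y (t + 1)|F t] ω
  rw [h1, Pi.smul_apply, h2, smul_eq_mul, prod_range_succ, mul_inv, mul_assoc,
    inv_mul_cancel_left₀ (hρ t)]

theorem MeasureTheory.Martingale.measure_limitProcess_ne_zero_pos [IsFiniteMeasure μ]
    {M : ℕ → Ω → ℝ} (hM : Martingale M F μ) (hUI : UniformIntegrable M 1 μ) {t : ℕ}
    (ht : ∫ ω, M t ω ^ 2 ∂μ ≠ 0) : 0 < μ {ω | F.limitProcess M μ ω ≠ 0} := by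
  refine pos_iff_ne_zero.2 fun h0 => ht (integral_eq_zero_of_ae ?_)
  have hlim : F.limitProcess M μ =ᵐ[μ] 0 := measure_eq_zero_iff_ae_notMem.1 h0 |>.mono
    fun ω hω => not_not.1 hω
  filter_upwards [(hM.ae_eq_condExp_limitProcess hUI t).trans <|
    (condExp_congr_ae hlim).trans (by rw [condExp_zero])] with ω hω
  simp [hω]

theorem exists_tendsto_rpow_mul_of_condExp_succ_eq_mul [IsFiniteMeasure μ] {Y : ℕ → Ω → ℝ}
    {ρ : ℕ → ℝ} {α κ d : ℝ} (hY : StronglyAdapted F Y) (hY2 : ∀ t, MemLp (Y t) 2 μ)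
    (hρ : ∀ t, ρ t ≠ 0) (hdrift : ∀ t, μ[Y (t + 1)|F t] =ᵐ[μ] fun ω => ρ t * Y t ω)
    (hprod : Tendsto (fun t : ℕ => (t : ℝ) ^ α * ∏ s ∈ range t, ρ s) atTop (𝓝 κ)) (hκ : κ ≠ 0)
    (hvar : Tendsto (fun t : ℕ => (t : ℝ) ^ (2 * α) * ∫ ω, Y t ω ^ 2 ∂μ) atTop (𝓝 d))
    (hd : d ≠ 0) :
    ∃ D : Ω → ℝ, (∀ᵐ ω ∂μ, Tendsto (fun t : ℕ => (t : ℝ) ^ α * Y t ω) atTop (𝓝 (D ω))) ∧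
      Tendsto (fun t : ℕ => ∫ ω, |(t : ℝ) ^ α * Y t ω - D ω| ∂μ) atTop (𝓝 0) ∧
      0 < μ {ω | D ω ≠ 0} := by
  have hπ : ∀ t, ∏ s ∈ range t, ρ s ≠ 0 := fun t => prod_ne_zero_iff.2 fun s _ => hρ s
  set M : ℕ → Ω → ℝ := fun t ω => (∏ s ∈ range t, ρ s)⁻¹ * Y t ω
  have hM : Martingale M F μ := martingale_inv_prod_mul_of_condExp_succ hY
    (fun t => (hY2 t).integrable one_le_two) hρ hdrift
  have hYM : ∀ (t : ℕ) ω, ((t : ℝ) ^ α * ∏ s ∈ range t, ρ s) * M t ω = (t : ℝ) ^ α * Y t ω :=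
    fun t ω => by simp only [M]; field_simp [hπ t]
  have hMvar : Tendsto (fun t => ∫ ω, M t ω ^ 2 ∂μ) atTop (𝓝 (d / κ ^ 2)) := by
    refine (hvar.div (hprod.pow 2) (pow_ne_zero 2 hκ)).congr' ?_
    filter_upwards [eventually_ne_atTop 0] with t ht
    have ht' : (0 : ℝ) < t := by positivity
    simp only [Pi.div_apply, M, mul_pow, integral_const_mul]
    rw [mul_comm 2 α, Real.rpow_mul ht'.le, Real.rpow_two]
    field_simp [hπ t]
  obtain ⟨B, hB⟩ := hMvar.bddAbove_range
  have hUI : UniformIntegrable M 1 μ :=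
    uniformIntegrable_of_integral_sq_le (fun t => (hY2 t).const_mul _) fun t => hB ⟨t, rfl⟩
  have hae := hM.submartingale.ae_tendsto_limitProcess_of_uniformIntegrable hUI
  refine ⟨fun ω => κ * F.limitProcess M μ ω, ?_, ?_, ?_⟩
  · filter_upwards [hae] with ω hω
    exact (hprod.mul hω).congr (hYM · ω)
  · refine (tendsto_integral_abs_mul_sub_mul (fun t => hM.integrable t)
      (hUI.integrable_of_ae_tendsto hae) hprod
      (hM.submartingale.tendsto_eLpNorm_one_limitProcess hUI)).congr fun t => ?_
    simp only [hYM]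
  · obtain ⟨t, ht⟩ := (hMvar.eventually_ne (div_ne_zero hd (pow_ne_zero 2 hκ))).exists
    simpa [hκ] using hM.measure_limitProcess_ne_zero_pos hUI ht

end Martingale

theorem urn_rec_mem_Icc {β : ℝ} (hβ : 0 ≤ β) {x ι : ℕ → ℝ} (hx0 : x 0 ∈ Set.Icc 0 1)
    (hι : ∀ t, ι (t + 1) ∈ Set.Icc 0 1)
    (hrec : ∀ t, x (t + 1) = ((β + t) * x t + ι (t + 1)) / (β + t + 1)) (t : ℕ) :
    x t ∈ Set.Icc 0 1 := by
  induction t with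
  | zero => exact hx0
  | succ t ih =>
    have hpos : (0 : ℝ) < β + t + 1 := by positivity
    obtain ⟨h0, h1⟩ := ih
    obtain ⟨hι0, hι1⟩ := hι t
    rw [hrec, Set.mem_Icc, div_le_one hpos]
    constructor
    · positivity
    · nlinarith

theorem abs_sub_sum_div_le_one {N : ℕ} {x : Fin N → ℝ} (hx : ∀ i, x i ∈ Set.Icc 0 1) (j : Fin N) :
    |x j - (∑ i, x i) / N| ≤ 1 := by
  have hN : (0 : ℝ) < N := by exact_mod_cast j.pos
  have hsum0 : 0 ≤ (∑ i, x i) / N := div_nonneg (sum_nonneg fun i _ => (hx i).1) hN.le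
  have hsum1 : (∑ i, x i) / N ≤ 1 := by
    rw [div_le_one hN]
    simpa using sum_le_sum fun i (_ : i ∈ Finset.univ) => (hx i).2
  rw [abs_le]
  constructor <;> linarith [(hx j).1, (hx j).2]

theorem stronglyMeasurable_urn_rec {Ω : Type*} {ℱ : ℕ → MeasurableSpace Ω} (hℱ : Monotone ℱ)
    {β : ℝ} {x ι : ℕ → Ω → ℝ} (hx0 : StronglyMeasurable[ℱ 0] (x 0))
    (hι : ∀ t, StronglyMeasurable[ℱ (t + 1)] (ι (t + 1)))
    (hrec : ∀ t ω, x (t + 1) ω = ((β + t) * x t ω + ι (t + 1) ω) / (β + t + 1)) (t : ℕ) :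
    StronglyMeasurable[ℱ t] (x t) := by
  induction t with
  | zero => exact hx0
  | succ t ih =>
    have := ih.mono (hℱ t.le_succ)
    have := hι t
    rw [funext (hrec t)]
    fun_prop

theorem stronglyMeasurable_sub_sum_div {Ω : Type*} {m : MeasurableSpace Ω} {N : ℕ}
    {f : Fin N → Ω → ℝ} (hf : ∀ i, StronglyMeasurable[m] (f i)) (j : Fin N) :
    StronglyMeasurable[m] fun ω => f j ω - (∑ i, f i ω) / N := by
  have := hf j
  have := Finset.stronglyMeasurable_fun_sum Finset.univ fun i _ => hf i
  fun_prop

theorem condExp_sub_sum_div {Ω : Type*} {m m0 : MeasurableSpace Ω} {μ : Measure Ω} {N : ℕ}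
    {f : Fin N → Ω → ℝ} (hf : ∀ i, Integrable (f i) μ) (j : Fin N) :
    μ[fun ω => f j ω - (∑ i, f i ω) / N|m] =ᵐ[μ] fun ω => μ[f j|m] ω - (∑ i, μ[f i|m] ω) / N := by
  have hsum : (fun ω => (∑ i, f i ω) / N) = (N : ℝ)⁻¹ • ∑ i, f i := by
    ext ω; simp [div_eq_inv_mul]
  rw [show (fun ω => f j ω - (∑ i, f i ω) / N) = f j - (N : ℝ)⁻¹ • ∑ i, f i by
    rw [← hsum]; rfl]
  filter_upwards [condExp_sub (hf j) ((integrable_finsetSum' _ fun i _ => hf i).smul (N : ℝ)⁻¹) m,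
    condExp_smul (N : ℝ)⁻¹ (∑ i, f i) m, condExp_finsetSum (s := univ) (fun i _ => hf i) m]
    with ω h1 h2 h3
  rw [h1, Pi.sub_apply, h2, Pi.smul_apply, h3, Finset.sum_apply, smul_eq_mul, div_eq_inv_mul]

theorem condExp_urn_deviation_step {Ω : Type*} {m m0 : MeasurableSpace Ω} (hm : m ≤ m0)
    {μ : Measure Ω} [SigmaFinite (μ.trim hm)] {N : ℕ} {s α : ℝ} (hs : 0 ≤ s)
    {x x' ι : Fin N → Ω → ℝ}
    (hx : ∀ i, StronglyMeasurable[m] (x i)) (hxint : ∀ i, Integrable (x i) μ)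
    (hι : ∀ i, Integrable (ι i) μ) (hrec : ∀ i ω, x' i ω = (s * x i ω + ι i ω) / (s + 1))
    (hcond : ∀ i, μ[ι i|m] =ᵐ[μ] fun ω => α * ((∑ k, x k ω) / N) + (1 - α) * x i ω)
    (j : Fin N) :
    μ[fun ω => x' j ω - (∑ i, x' i ω) / N|m] =ᵐ[μ]
      fun ω => (s + 1 - α) / (s + 1) * (x j ω - (∑ i, x i ω) / N) := by
  have hN : (N : ℝ) ≠ 0 := by exact_mod_cast j.pos.ne'
  have hs1 : s + 1 ≠ 0 := by positivity
  set Y : Ω → ℝ := fun ω => x j ω - (∑ i, x i ω) / N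
  set D : Ω → ℝ := fun ω => ι j ω - (∑ i, ι i ω) / N
  have hYint : Integrable Y μ :=
    (hxint j).sub ((integrable_finsetSum _ fun i _ => hxint i).div_const _)
  have hDint : Integrable D μ :=
    (hι j).sub ((integrable_finsetSum _ fun i _ => hι i).div_const _)
  have hYm : StronglyMeasurable[m] Y := stronglyMeasurable_sub_sum_div hx j
  have hsplit : (fun ω => x' j ω - (∑ i, x' i ω) / N) = (s / (s + 1)) • Y + (s + 1)⁻¹ • D := by
    ext ω
    simp only [hrec, Y, D, Pi.add_apply, Pi.smul_apply, smul_eq_mul, ← sum_div,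
      sum_add_distrib, ← mul_sum]
    field_simp
    ring
  -- the common term `α x̄` of the conditional means cancels in the deviation from the mean
  have hD : μ[D|m] =ᵐ[μ] fun ω => (1 - α) * Y ω := by
    filter_upwards [condExp_sub_sum_div hι j (m := m), ae_all_iff.2 hcond] with ω h hall
    rw [h, hall j]
    simp only [hall, Y, sum_add_distrib, ← mul_sum, sum_const, card_univ, Fintype.card_fin,
      nsmul_eq_mul]
    field_simp
    ring
  rw [hsplit]
  filter_upwards [condExp_add (hYint.smul (s / (s + 1))) (hDint.smul (s + 1)⁻¹) m,
    condExp_smul (s / (s + 1)) Y m, condExp_smul (s + 1)⁻¹ D m, hD] with ω h1 h2 h3 h4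
  rw [h1, Pi.add_apply, h2, h3, Pi.smul_apply, Pi.smul_apply, h4,
    condExp_of_stronglyMeasurable hm hYm hYint, smul_eq_mul, smul_eq_mul]
  change _ = (s + 1 - α) / (s + 1) * Y ω
  field_simp
  ring

theorem stmt_11_general {Ω : Type*} [m0 : MeasurableSpace Ω] (P : Measure Ω) [IsProbabilityMeasure P]
    (α : ℝ) (hα12 : α < 1 / 2)
    (N : ℕ) (a b : ℕ)
    (ℱ : ℕ → MeasurableSpace Ω) (hℱle : ∀ t, ℱ t ≤ m0) (hℱmono : Monotone ℱ)
    (I Z : ℕ → Fin N → Ω → ℝ)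
    -- each I_{t+1}(i) is an indicator, ℱ_{t+1}-measurable
    (hI01 : ∀ t i ω, I (t + 1) i ω = 0 ∨ I (t + 1) i ω = 1)
    (hImeas : ∀ t i, StronglyMeasurable[ℱ (t + 1)] (I (t + 1) i))
    -- initial composition: a red and b black balls in each urn
    (hZ0 : ∀ i ω, Z 0 i ω = (a : ℝ) / ((a : ℝ) + b))
    -- proportion dynamics
    (hZrec : ∀ t i ω, Z (t + 1) i ω =
      (((a : ℝ) + b + t) * Z t i ω + I (t + 1) i ω) / ((a : ℝ) + b + t + 1))
    -- conditional probability of adding a red ball in urn i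
    (hcond : ∀ t i, P[I (t + 1) i|ℱ t] =ᵐ[P]
      fun ω => α * ((∑ k, Z t k ω) / N) + (1 - α) * Z t i ω)
    (j : Fin N)
    -- known fact: E[(Z_t(j) - Z̄_t)²] ~ d(α) t^{-2α} with d(α) > 0
    (hvar : ∃ d : ℝ, 0 < d ∧ Tendsto (fun t : ℕ =>
        (t : ℝ) ^ (2 * α) * ∫ ω, (Z t j ω - (∑ i, Z t i ω) / N) ^ 2 ∂P)
      atTop (nhds d)) :
    ∃ Dlim : Ω → ℝ,
      (∀ᵐ ω ∂P, Tendsto (fun t : ℕ => (t : ℝ) ^ α * (Z t j ω - (∑ i, Z t i ω) / N))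
          atTop (nhds (Dlim ω))) ∧
        Tendsto (fun t : ℕ =>
            ∫ ω, |(t : ℝ) ^ α * (Z t j ω - (∑ i, Z t i ω) / N) - Dlim ω| ∂P)
          atTop (nhds 0) ∧
        0 < P {ω | Dlim ω ≠ 0} := by
  obtain ⟨d, hd, hvar⟩ := hvar
  set β : ℝ := (a : ℝ) + b
  have hβ : 0 ≤ β := by positivity
  let F : Filtration ℕ m0 := ⟨ℱ, hℱmono, hℱle⟩
  have hI : ∀ t i ω, I (t + 1) i ω ∈ Set.Icc 0 1 := fun t i ω => by
    rcases hI01 t i ω with h | h <;> rw [h] <;> norm_num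
  have hZ : ∀ t i ω, Z t i ω ∈ Set.Icc 0 1 := fun t i ω =>
    urn_rec_mem_Icc hβ (x := fun t => Z t i ω) (ι := fun t => I t i ω)
      (by rw [hZ0]; exact ⟨by positivity, div_le_one_of_le₀ (by simp [β]) hβ⟩)
      (fun t => hI t i ω) (fun t => hZrec t i ω) t
  have hZm : ∀ t i, StronglyMeasurable[ℱ t] (Z t i) := fun t i =>
    stronglyMeasurable_urn_rec hℱmono (x := fun t => Z t i) (ι := fun t => I t i)
      (by rw [funext (hZ0 i)]; exact stronglyMeasurable_const) (fun t => hImeas t i)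
      (fun t => hZrec t i) t
  set Y : ℕ → Ω → ℝ := fun t ω => Z t j ω - (∑ i, Z t i ω) / N
  have hY : StronglyAdapted F Y := fun t => stronglyMeasurable_sub_sum_div (hZm t) j
  have hY2 : ∀ t, MemLp (Y t) 2 P := fun t =>
    MemLp.of_bound ((hY t).mono (hℱle t)).aestronglyMeasurable 1
      (ae_of_all _ fun ω => abs_sub_sum_div_le_one (hZ t · ω) j)
  have hdrift : ∀ t, P[Y (t + 1)|F t] =ᵐ[P]
      fun ω => (β + t + 1 - α) / (β + t + 1) * Y t ω := fun t =>
    condExp_urn_deviation_step (hℱle t) (by positivity) (hZm t)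
      (fun i => .of_mem_Icc 0 1 ((hZm t i).mono (hℱle t)).measurable.aemeasurable
        (ae_of_all _ (hZ t i)))
      (fun i => .of_mem_Icc 0 1 ((hImeas t i).mono (hℱle _)).measurable.aemeasurable
        (ae_of_all _ (hI t i)))
      (hZrec t) (hcond t) j
  exact exists_tendsto_rpow_mul_of_condExp_succ_eq_mul hY hY2
    (fun t => div_ne_zero (by linarith [t.cast_nonneg (α := ℝ)]) (by positivity)) hdrift
    (tendsto_rpow_mul_prod_sub_div (by positivity) (by linarith))
    (div_pos (Real.Gamma_pos_of_pos (by positivity)) (Real.Gamma_pos_of_pos (by linarith))).ne'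
    hvar hd.ne'

/-- For `0 < α < 1/2`, `t^α (Z_t(j) - Z̄_t)` converges a.s. and in L¹ to a real random
variable `D̃` with `P(D̃ ≠ 0) > 0`. -/
theorem stmt_11 {Ω : Type*} [m0 : MeasurableSpace Ω] (P : Measure Ω) [IsProbabilityMeasure P]
    (α : ℝ) (hα0 : 0 < α) (hα12 : α < 1 / 2)
    (N : ℕ) (hN : 1 < N) (a b : ℕ) (ha : 1 ≤ a) (hb : 1 ≤ b)
    (ℱ : ℕ → MeasurableSpace Ω) (hℱle : ∀ t, ℱ t ≤ m0) (hℱmono : Monotone ℱ)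
    (I Z : ℕ → Fin N → Ω → ℝ)
    -- each I_{t+1}(i) is an indicator, ℱ_{t+1}-measurable
    (hI01 : ∀ t i ω, I (t + 1) i ω = 0 ∨ I (t + 1) i ω = 1)
    (hImeas : ∀ t i, StronglyMeasurable[ℱ (t + 1)] (I (t + 1) i))
    -- initial composition: a red and b black balls in each urn
    (hZ0 : ∀ i ω, Z 0 i ω = (a : ℝ) / ((a : ℝ) + b))
    -- proportion dynamics
    (hZrec : ∀ t i ω, Z (t + 1) i ω =
      (((a : ℝ) + b + t) * Z t i ω + I (t + 1) i ω) / ((a : ℝ) + b + t + 1))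
    -- conditional probability of adding a red ball in urn i
    (hcond : ∀ t i, P[I (t + 1) i|ℱ t] =ᵐ[P]
      fun ω => α * ((∑ k, Z t k ω) / N) + (1 - α) * Z t i ω)
    -- conditional independence of the urns
    (hcondindep : ∀ t, ∀ i j, i ≠ j →
      P[fun ω => I (t + 1) i ω * I (t + 1) j ω|ℱ t] =ᵐ[P]
        fun ω => (α * ((∑ k, Z t k ω) / N) + (1 - α) * Z t i ω) *
          (α * ((∑ k, Z t k ω) / N) + (1 - α) * Z t j ω))
    (j : Fin N)
    -- known fact: E[(Z_t(j) - Z̄_t)²] ~ d(α) t^{-2α} with d(α) > 0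
    (hvar : ∃ d : ℝ, 0 < d ∧ Tendsto (fun t : ℕ =>
        (t : ℝ) ^ (2 * α) * ∫ ω, (Z t j ω - (∑ i, Z t i ω) / N) ^ 2 ∂P)
      atTop (nhds d)) :
    ∃ Dlim : Ω → ℝ,
      (∀ᵐ ω ∂P, Tendsto (fun t : ℕ => (t : ℝ) ^ α * (Z t j ω - (∑ i, Z t i ω) / N))
          atTop (nhds (Dlim ω))) ∧
        Tendsto (fun t : ℕ =>
            ∫ ω, |(t : ℝ) ^ α * (Z t j ω - (∑ i, Z t i ω) / N) - Dlim ω| ∂P)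
          atTop (nhds 0) ∧
        0 < P {ω | Dlim ω ≠ 0} :=
  stmt_11_general (m0 := m0) P α hα12 N a b ℱ hℱle hℱmono I Z hI01 hImeas hZ0 hZrec hcond j hvar
end

section
/- In the system of N interacting Pólya urns, the almost sure limit Z of the total proportion Z_t satisfies P(Z = 0) + P(Z = 1) < 1 and P(Z = z) = 0 for every z ∈ (0,1). -/
/-!
On the event `{Z = z}`, Lévy's upward theorem gives `P(Z = z | ℱ_t) → 1`, so the conditional
law of `√t (Z̄_t - Z)` given `ℱ_t` is asymptotically the point mass at the `ℱ_t`-measurable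
value `√t (Z̄_t - z)`. A point mass cannot approach a law of full support such as `N(0, (z - z²)/N)`
with `z ∈ (0,1)`: of the two cutoffs `min 1 |x|` and `min 1 (max 0 (2 - |x|))` one equals 1 at
the atom, while both have Gaussian integral `< 1`. The bound `P(Z = 0) + P(Z = 1) < 1` is just
`E[Z(1 - Z)] > 0`.
-/

open Filter Finset MeasureTheory ProbabilityTheory

open scoped NNReal Topology

theorem integral_lt_one_of_continuous {X : Type*} [TopologicalSpace X] [MeasurableSpace X]
    [OpensMeasurableSpace X] (μ : Measure X) [IsProbabilityMeasure μ] [μ.IsOpenPosMeasure]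
    {f : X → ℝ} (hf : Continuous f) (hf01 : ∀ x, f x ∈ Set.Icc 0 1) {x₀ : X}
    (hx₀ : f x₀ < 1) : ∫ x, f x ∂μ < 1 := by
  have hfi : Integrable f μ := .of_mem_Icc 0 1 hf.measurable.aemeasurable (ae_of_all _ hf01)
  have hpos : 0 < ∫ x, (1 - f x) ∂μ := by
    rw [integral_pos_iff_support_of_nonneg (fun x => sub_nonneg.2 (hf01 x).2)
      ((integrable_const 1).sub hfi)]
    exact (continuous_const.sub hf).isOpen_support.measure_pos μ
      ⟨x₀, sub_ne_zero.2 hx₀.ne'⟩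
  rw [integral_sub (integrable_const 1) hfi, integral_const, probReal_univ, one_smul] at hpos
  linarith

theorem measure_eq_zero_add_measure_eq_one_lt_one {Ω : Type*} [MeasurableSpace Ω]
    {P : Measure Ω} [IsProbabilityMeasure P] {L : Ω → ℝ} (hL : AEMeasurable L P)
    (hpos : 0 < ∫ ω, L ω * (1 - L ω) ∂P) : P {ω | L ω = 0} + P {ω | L ω = 1} < 1 := by
  have hnull : ∀ y : Set ℝ, MeasurableSet y → NullMeasurableSet {ω | L ω ∈ y} P :=
    fun y hy => hL.nullMeasurableSet_preimage hy
  have hdisj : Disjoint {ω | L ω = 0} {ω | L ω = 1} :=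
    Set.disjoint_left.2 fun ω (h0 : L ω = 0) (h1 : L ω = 1) => zero_ne_one (h0.symm.trans h1)
  have hunion : P ({ω | L ω = 0} ∪ {ω | L ω = 1}) = P {ω | L ω = 0} + P {ω | L ω = 1} :=
    measure_union₀ (hnull {1} (measurableSet_singleton 1)) hdisj.aedisjoint
  rw [← hunion]
  refine prob_le_one.lt_of_ne fun hone => hpos.ne' ?_
  have hae : ∀ᵐ ω ∂P, L ω = 0 ∨ L ω = 1 :=
    (ae_iff_measure_eq (hnull {0, 1} (.insert (measurableSet_singleton 1) 0))).2
      (hone.trans measure_univ.symm)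
  refine integral_eq_zero_of_ae ?_
  filter_upwards [hae] with ω hω
  rcases hω with h | h <;> simp [h]

theorem one_le_max_of_tendsto {φ ψ : ℝ → ℝ} (hφψ : ∀ x, 1 ≤ max (φ x) (ψ x))
    {x p c d : ℕ → ℝ} {C D : ℝ} (hp : Tendsto p atTop (𝓝 1)) (hc : Tendsto c atTop (𝓝 C))
    (hd : Tendsto d atTop (𝓝 D)) (hφ : ∀ t, φ (x t) * p t ≤ c t)
    (hψ : ∀ t, ψ (x t) * p t ≤ d t) : 1 ≤ max C D := by
  refine le_of_tendsto_of_tendsto hp (hc.max hd) ?_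
  filter_upwards [hp.eventually_const_lt one_pos] with t ht
  calc p t ≤ max (φ (x t)) (ψ (x t)) * p t := le_mul_of_one_le_left ht.le (hφψ _)
    _ = max (φ (x t) * p t) (ψ (x t) * p t) := max_mul_of_nonneg _ _ ht.le
    _ ≤ max (c t) (d t) := max_le_max (hφ t) (hψ t)

def farCutoff (x : ℝ) : ℝ := min 1 |x|

def nearCutoff (x : ℝ) : ℝ := min 1 (max 0 (2 - |x|))

theorem continuous_farCutoff : Continuous farCutoff :=
  continuous_const.min continuous_abs

theorem continuous_nearCutoff : Continuous nearCutoff :=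
  continuous_const.min (continuous_const.max (continuous_const.sub continuous_abs))

theorem farCutoff_mem_Icc (x : ℝ) : farCutoff x ∈ Set.Icc 0 1 :=
  ⟨le_min zero_le_one (abs_nonneg x), min_le_left _ _⟩

theorem nearCutoff_mem_Icc (x : ℝ) : nearCutoff x ∈ Set.Icc 0 1 :=
  ⟨le_min zero_le_one (le_max_left _ _), min_le_left _ _⟩

theorem max_farCutoff_nearCutoff (x : ℝ) : 1 ≤ max (farCutoff x) (nearCutoff x) := by
  rcases le_total 1 |x| with h | h
  · exact le_max_of_le_left (le_min le_rfl h)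
  · exact le_max_of_le_right (le_min le_rfl (le_max_of_le_right (by linarith)))

theorem farCutoff_zero : farCutoff 0 = 0 := by
  simp [farCutoff]

theorem nearCutoff_three : nearCutoff 3 = 0 := by
  norm_num [nearCutoff]

theorem not_tendsto_one_of_cutoff_mul_le (ν : Measure ℝ) [IsProbabilityMeasure ν]
    [ν.IsOpenPosMeasure] {x p c d : ℕ → ℝ}
    (hc : Tendsto c atTop (𝓝 (∫ y, farCutoff y ∂ν)))
    (hd : Tendsto d atTop (𝓝 (∫ y, nearCutoff y ∂ν)))
    (hfar : ∀ t, farCutoff (x t) * p t ≤ c t) (hnear : ∀ t, nearCutoff (x t) * p t ≤ d t) :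
    ¬Tendsto p atTop (𝓝 1) := fun hp =>
  (max_lt
    (integral_lt_one_of_continuous ν continuous_farCutoff farCutoff_mem_Icc (x₀ := 0)
      (by simp [farCutoff_zero]))
    (integral_lt_one_of_continuous ν continuous_nearCutoff nearCutoff_mem_Icc (x₀ := 3)
      (by simp [nearCutoff_three]))).not_ge
    (one_le_max_of_tendsto max_farCutoff_nearCutoff hp hc hd hfar hnear)

theorem aestronglyMeasurable_iSup_of_tendsto_ae {Ω : Type*} {m0 : MeasurableSpace Ω}
    {P : Measure Ω} {ℱ : Filtration ℕ m0} {X : ℕ → Ω → ℝ} (hX : StronglyAdapted ℱ X)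
    {L : Ω → ℝ} (hXL : ∀ᵐ ω ∂P, Tendsto (X · ω) atTop (𝓝 (L ω))) :
    AEStronglyMeasurable[⨆ n, ℱ n] L P :=
  ⟨fun ω => limUnder atTop (X · ω),
    @StronglyMeasurable.limUnder _ _ _ (⨆ n, ℱ n) _ _ _ _ _ _ _
      fun n => (hX n).mono (le_iSup ℱ n),
    by filter_upwards [hXL] with ω h using h.limUnder_eq.symm⟩

theorem mul_condExp_indicator_le_condExp {Ω : Type*} {m m0 : MeasurableSpace Ω}
    {P : Measure Ω} [IsFiniteMeasure P] (hm : m ≤ m0) {Y L : Ω → ℝ}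
    (hY : StronglyMeasurable[m] Y) (hL : AEStronglyMeasurable L P) {A : Set Ω}
    (hA : MeasurableSet A) {z : ℝ} (hAL : ∀ᵐ ω ∂P, ω ∈ A → L ω = z) {f : ℝ → ℝ}
    (hf : Continuous f) (hf01 : ∀ x, f x ∈ Set.Icc 0 1) :
    (fun ω => f (Y ω - z)) * P[A.indicator (1 : Ω → ℝ)|m] ≤ᵐ[P]
      P[fun ω => f (Y ω - L ω)|m] := by
  set u : Ω → ℝ := fun ω => f (Y ω - z)
  have hu : StronglyMeasurable[m] u :=
    hf.comp_stronglyMeasurable (hY.sub stronglyMeasurable_const)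
  have hA1 : Integrable (A.indicator (1 : Ω → ℝ)) P := (integrable_const 1).indicator hA
  have huA : Integrable (u * A.indicator (1 : Ω → ℝ)) P := by
    refine .of_mem_Icc 0 1 ((hu.mono hm).aestronglyMeasurable.mul hA1.1).aemeasurable
      (ae_of_all _ fun ω => ?_)
    by_cases hω : ω ∈ A <;> simp [u, hω, (hf01 _).1, (hf01 _).2]
  have hW : Integrable (fun ω => f (Y ω - L ω)) P :=
    .of_mem_Icc 0 1 (hf.comp_aestronglyMeasurable
      ((hY.mono hm).aestronglyMeasurable.sub hL)).aemeasurable (ae_of_all _ fun _ => hf01 _)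
  have hle : u * A.indicator (1 : Ω → ℝ) ≤ᵐ[P] fun ω => f (Y ω - L ω) := by
    filter_upwards [hAL] with ω hω
    by_cases hωA : ω ∈ A
    · simp [u, hωA, hω hωA]
    · simp [hωA, (hf01 _).1]
  filter_upwards [condExp_mul_of_stronglyMeasurable_left hu huA hA1,
    condExp_mono (m := m) huA hW hle] with ω hpull hmono
  rw [← hpull]
  exact hmono

theorem measure_eq_eq_zero_of_condExp_tendsto_gaussian {Ω : Type*} {m0 : MeasurableSpace Ω}
    {P : Measure Ω} [IsProbabilityMeasure P] (ℱ : Filtration ℕ m0) {X : ℕ → Ω → ℝ}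
    (hX : StronglyAdapted ℱ X) {L : Ω → ℝ} (hXL : ∀ᵐ ω ∂P, Tendsto (X · ω) atTop (𝓝 (L ω)))
    (s : ℕ → ℝ) (σ : ℝ → ℝ≥0)
    (hclt : ∀ f : ℝ → ℝ, Continuous f → (∃ C, ∀ x, |f x| ≤ C) →
      ∀ᵐ ω ∂P, Tendsto (fun t => (P[fun ω' => f (s t * (X t ω' - L ω'))|ℱ t]) ω) atTop
        (𝓝 (∫ x, f x ∂gaussianReal 0 (σ (L ω)))))
    {z : ℝ} (hz : σ z ≠ 0) : P {ω | L ω = z} = 0 := by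
  obtain ⟨g, hg, hLg⟩ := aestronglyMeasurable_iSup_of_tendsto_ae hX hXL
  set A := {ω | g ω = z}
  have hA : MeasurableSet[⨆ n, ℱ n] A := hg.measurable (measurableSet_singleton z)
  have hAL : ∀ᵐ ω ∂P, ω ∈ A → L ω = z := by
    filter_upwards [hLg] with ω hω hωA using hω.trans hωA
  have hL : AEStronglyMeasurable L P := ⟨g, hg.mono (iSup_le ℱ.le), hLg⟩
  have hlevy : ∀ᵐ ω ∂P, Tendsto (fun t => (P[A.indicator (1 : Ω → ℝ)|ℱ t]) ω) atTop
      (𝓝 (A.indicator 1 ω)) :=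
    ((integrable_const 1).indicator (iSup_le ℱ.le _ hA)).tendsto_ae_condExp
      (stronglyMeasurable_const.indicator hA)
  have hpoint : ∀ f : ℝ → ℝ, Continuous f → (∀ x, f x ∈ Set.Icc 0 1) → ∀ᵐ ω ∂P, ∀ t,
      f (s t * (X t ω - z)) * (P[A.indicator (1 : Ω → ℝ)|ℱ t]) ω ≤
        (P[fun ω' => f (s t * (X t ω' - L ω'))|ℱ t]) ω := fun f hf hf01 =>
    ae_all_iff.2 fun t => mul_condExp_indicator_le_condExp (ℱ.le t) (hX t)
      hL (iSup_le ℱ.le _ hA) hAL (hf.comp (continuous_const_mul (s t))) fun _ => hf01 _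
  have hlim : ∀ f : ℝ → ℝ, Continuous f → (∀ x, f x ∈ Set.Icc 0 1) → ∀ᵐ ω ∂P, ω ∈ A →
      Tendsto (fun t => (P[fun ω' => f (s t * (X t ω' - L ω'))|ℱ t]) ω) atTop
        (𝓝 (∫ x, f x ∂gaussianReal 0 (σ z))) := fun f hf hf01 => by
    filter_upwards [hclt f hf ⟨1, fun x => abs_le.2 ⟨by linarith [(hf01 x).1], (hf01 x).2⟩⟩,
      hAL] with ω hω hωL hωA
    rwa [hωL hωA] at hω
  have := (gaussianReal_absolutelyContinuous' 0 hz).isOpenPosMeasure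
  have hnull : ∀ᵐ ω ∂P, ω ∉ A := by
    filter_upwards [hlevy, hpoint _ continuous_farCutoff farCutoff_mem_Icc,
      hpoint _ continuous_nearCutoff nearCutoff_mem_Icc,
      hlim _ continuous_farCutoff farCutoff_mem_Icc,
      hlim _ continuous_nearCutoff nearCutoff_mem_Icc] with ω hlev hfar hnear hcfar hcnear hωA
    rw [Set.indicator_of_mem hωA] at hlev
    exact not_tendsto_one_of_cutoff_mul_le _ (hcfar hωA) (hcnear hωA) hfar hnear hlev
  rw [measure_congr (show {ω | L ω = z} =ᵐ[P] A by
    filter_upwards [hLg] with ω hω using congrArg (· = z) hω)]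
  exact measure_eq_zero_iff_ae_notMem.2 hnull

theorem adapted_proportion {Ω ι : Type*} {m0 : MeasurableSpace Ω}
    (ℱ : Filtration ℕ m0) {I Z : ℕ → ι → Ω → ℝ} {c₀ c : ℝ}
    (hI : ∀ t i, StronglyMeasurable[ℱ (t + 1)] (I (t + 1) i)) (hZ0 : ∀ i ω, Z 0 i ω = c₀)
    (hZrec : ∀ t i ω, Z (t + 1) i ω = ((c + t) * Z t i ω + I (t + 1) i ω) / (c + t + 1))
    (i : ι) : Adapted ℱ (fun t => Z t i) := by
  intro t
  induction t with
  | zero =>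
    change Measurable[ℱ 0] (Z 0 i)
    rw [show Z 0 i = fun _ => c₀ from funext (hZ0 i)]
    exact measurable_const
  | succ t ih =>
    change Measurable[ℱ (t + 1)] (Z (t + 1) i)
    rw [show Z (t + 1) i = _ from funext (hZrec t i)]
    exact ((measurable_const.mul (ih.mono (ℱ.mono t.le_succ) le_rfl)).add
      (hI t i).measurable).div_const _

theorem stmt_13_general {Ω : Type*} [m0 : MeasurableSpace Ω] (P : Measure Ω) [IsProbabilityMeasure P]
    (N : ℕ) (hN : 1 < N) (a b : ℕ)
    (ℱ : ℕ → MeasurableSpace Ω) (hℱle : ∀ t, ℱ t ≤ m0) (hℱmono : Monotone ℱ)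
    (I Z : ℕ → Fin N → Ω → ℝ)
    -- each I_{t+1}(i) is an indicator, ℱ_{t+1}-measurable
    (hImeas : ∀ t i, StronglyMeasurable[ℱ (t + 1)] (I (t + 1) i))
    -- initial composition: a red and b black balls in each urn
    (hZ0 : ∀ i ω, Z 0 i ω = (a : ℝ) / ((a : ℝ) + b))
    -- proportion dynamics
    (hZrec : ∀ t i ω, Z (t + 1) i ω =
      (((a : ℝ) + b + t) * Z t i ω + I (t + 1) i ω) / ((a : ℝ) + b + t + 1))
    (Zlim : Ω → ℝ)
    (hZlim : ∀ᵐ ω ∂P, Tendsto (fun t => (∑ i, Z t i ω) / N) atTop (nhds (Zlim ω)))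
    -- known fact: E[Z(1-Z)] > 0
    (hmean : 0 < ∫ ω, Zlim ω * (1 - Zlim ω) ∂P)
    -- known fact: a.s. conditional convergence of √t (Z̄_t - Z) to N(0, (1/N)(Z - Z²))
    (hascond : ∀ f : ℝ → ℝ, Continuous f → (∃ C, ∀ x, |f x| ≤ C) →
      ∀ᵐ ω ∂P, Tendsto (fun t : ℕ =>
          (P[fun ω' => f (Real.sqrt t * ((∑ i, Z t i ω') / N - Zlim ω'))|ℱ t]) ω)
        atTop
        (nhds (∫ x, f x ∂(gaussianReal 0
          (Real.toNNReal ((1 / N) * (Zlim ω - Zlim ω ^ 2))))))) :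
    P {ω | Zlim ω = 0} + P {ω | Zlim ω = 1} < 1 ∧
      ∀ z : ℝ, z ∈ Set.Ioo (0 : ℝ) 1 → P {ω | Zlim ω = z} = 0 := by
  let 𝒢 : Filtration ℕ m0 := ⟨ℱ, hℱmono, hℱle⟩
  have hmeanAdapted : StronglyAdapted 𝒢 fun t ω => (∑ i, Z t i ω) / N := fun t =>
    ((Finset.measurable_fun_sum _ fun i _ =>
      adapted_proportion 𝒢 hImeas hZ0 hZrec i t).div_const _).stronglyMeasurable
  have hZlimMeas : AEMeasurable Zlim P :=
    ((aestronglyMeasurable_iSup_of_tendsto_ae hmeanAdapted hZlim).mono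
      (iSup_le 𝒢.le)).aemeasurable
  refine ⟨measure_eq_zero_add_measure_eq_one_lt_one hZlimMeas hmean, fun z hz => ?_⟩
  refine measure_eq_eq_zero_of_condExp_tendsto_gaussian 𝒢 hmeanAdapted hZlim (fun t => √t)
    (fun y => ((1 / N) * (y - y ^ 2)).toNNReal) hascond ?_
  have hNpos : (0 : ℝ) < N := by exact_mod_cast (zero_lt_one.trans hN)
  simp only [ne_eq, Real.toNNReal_eq_zero, not_le]
  exact mul_pos (by positivity) (by nlinarith [hz.1, hz.2])

/-- The a.s. limit `Z` of the total proportion `Z̄_t` satisfies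
`P(Z = 0) + P(Z = 1) < 1` and `P(Z = z) = 0` for every `z ∈ (0,1)`. -/
theorem stmt_13 {Ω : Type*} [m0 : MeasurableSpace Ω] (P : Measure Ω) [IsProbabilityMeasure P]
    (α : ℝ) (hα0 : 0 ≤ α) (hα1 : α ≤ 1)
    (N : ℕ) (hN : 1 < N) (a b : ℕ) (ha : 1 ≤ a) (hb : 1 ≤ b)
    (ℱ : ℕ → MeasurableSpace Ω) (hℱle : ∀ t, ℱ t ≤ m0) (hℱmono : Monotone ℱ)
    (I Z : ℕ → Fin N → Ω → ℝ)
    -- each I_{t+1}(i) is an indicator, ℱ_{t+1}-measurable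
    (hI01 : ∀ t i ω, I (t + 1) i ω = 0 ∨ I (t + 1) i ω = 1)
    (hImeas : ∀ t i, StronglyMeasurable[ℱ (t + 1)] (I (t + 1) i))
    -- initial composition: a red and b black balls in each urn
    (hZ0 : ∀ i ω, Z 0 i ω = (a : ℝ) / ((a : ℝ) + b))
    -- proportion dynamics
    (hZrec : ∀ t i ω, Z (t + 1) i ω =
      (((a : ℝ) + b + t) * Z t i ω + I (t + 1) i ω) / ((a : ℝ) + b + t + 1))
    -- conditional probability of adding a red ball in urn i
    (hcond : ∀ t i, P[I (t + 1) i|ℱ t] =ᵐ[P]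
      fun ω => α * ((∑ k, Z t k ω) / N) + (1 - α) * Z t i ω)
    -- conditional independence of the urns
    (hcondindep : ∀ t, ∀ i j, i ≠ j →
      P[fun ω => I (t + 1) i ω * I (t + 1) j ω|ℱ t] =ᵐ[P]
        fun ω => (α * ((∑ k, Z t k ω) / N) + (1 - α) * Z t i ω) *
          (α * ((∑ k, Z t k ω) / N) + (1 - α) * Z t j ω))
    (Zlim : Ω → ℝ) (hZlimMeas : Measurable Zlim)
    (hZlim : ∀ᵐ ω ∂P, Tendsto (fun t => (∑ i, Z t i ω) / N) atTop (nhds (Zlim ω)))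
    -- known fact: E[Z(1-Z)] > 0
    (hmean : 0 < ∫ ω, Zlim ω * (1 - Zlim ω) ∂P)
    -- known fact: a.s. conditional convergence of √t (Z̄_t - Z) to N(0, (1/N)(Z - Z²))
    (hascond : ∀ f : ℝ → ℝ, Continuous f → (∃ C, ∀ x, |f x| ≤ C) →
      ∀ᵐ ω ∂P, Tendsto (fun t : ℕ =>
          (P[fun ω' => f (Real.sqrt t * ((∑ i, Z t i ω') / N - Zlim ω'))|ℱ t]) ω)
        atTop
        (nhds (∫ x, f x ∂(gaussianReal 0
          (Real.toNNReal ((1 / N) * (Zlim ω - Zlim ω ^ 2))))))) :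
    P {ω | Zlim ω = 0} + P {ω | Zlim ω = 1} < 1 ∧
      ∀ z : ℝ, z ∈ Set.Ioo (0 : ℝ) 1 → P {ω | Zlim ω = z} = 0 :=
  stmt_13_general (m0 := m0) P N hN a b ℱ hℱle hℱmono I Z hImeas hZ0 hZrec Zlim hZlim hmean hascond
end

section
/- In the system of N interacting Pólya urns, for a fixed urn j, the conditional covariance satisfies E[k² (Z_{k+1}(j) − Z_k(j))(Z_{k+1} − Z_k) | F_k] → (1/N)(Z − Z²) almost surely as k → ∞. -/
open Filter Finset MeasureTheory

/-!
Since `Z_{k+1}(i) - Z_k(i) = (I_{k+1}(i) - Z_k(i)) / (m + k + 1)`, the quantity in question is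
`k² / (N (m + k + 1)²) · ∑ᵢ E[(I_{k+1}(i) - Z_k(i)) (I_{k+1}(j) - Z_k(j)) | ℱ_k]`.
Writing `p_i` for the conditional success probabilities, conditional independence for `i ≠ j`
and `I² = I` for `i = j` give the summands as `(p_i - Z_k(i)) (p_j - Z_k(j)) + δᵢⱼ p_j (1 - p_j)`.
All `Z_k(i)`, hence all `p_i`, tend to `Z`, so only the diagonal term survives in the limit,
tending to `Z (1 - Z)`, while `k² / (m + k + 1)² → 1`.
-/

section CondExp

variable {Ω ι : Type*} {m m0 : MeasurableSpace Ω} {μ : Measure Ω}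

theorem condExp_sub_mul_sub (hm : m ≤ m0) [SigmaFinite (μ.trim hm)] {X Y U V : Ω → ℝ}
    (hU : StronglyMeasurable[m] U) (hV : StronglyMeasurable[m] V)
    (hX : Integrable X μ) (hY : Integrable Y μ) (hXY : Integrable (X * Y) μ)
    (hUY : Integrable (U * Y) μ) (hVX : Integrable (V * X) μ) (hUV : Integrable (U * V) μ) :
    μ[(X - U) * (Y - V) | m] =ᵐ[μ] μ[X * Y | m] - U * μ[Y | m] - V * μ[X | m] + U * V := by
  have hexpand : (X - U) * (Y - V) = X * Y - U * Y - V * X + U * V := by ring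
  rw [hexpand]
  filter_upwards [condExp_add ((hXY.sub hUY).sub hVX) hUV m,
    condExp_sub (hXY.sub hUY) hVX m, condExp_sub hXY hUY m,
    condExp_mul_of_stronglyMeasurable_left hU hUY hY,
    condExp_mul_of_stronglyMeasurable_left hV hVX hX] with ω h₁ h₂ h₃ h₄ h₅
  simp only [Pi.add_apply, Pi.sub_apply] at h₁ h₂ h₃ ⊢
  rw [h₁, h₂, h₃, h₄, h₅, condExp_of_stronglyMeasurable hm (hU.mul hV) hUV]

theorem condExp_bernoulli_sub_mul_sub [DecidableEq ι] (hm : m ≤ m0) [IsFiniteMeasure μ]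
    {X z p : ι → Ω → ℝ} {C : ℝ}
    (hX01 : ∀ i ω, X i ω = 0 ∨ X i ω = 1) (hXmeas : ∀ i, StronglyMeasurable[m0] (X i))
    (hz : ∀ i, StronglyMeasurable[m] (z i)) (hzC : ∀ i ω, ‖z i ω‖ ≤ C)
    (hp : ∀ i, μ[X i | m] =ᵐ[μ] p i)
    (hindep : ∀ i j, i ≠ j → μ[X i * X j | m] =ᵐ[μ] p i * p j) (i j : ι) :
    μ[(X i - z i) * (X j - z j) | m] =ᵐ[μ] fun ω =>
      (p i ω - z i ω) * (p j ω - z j ω) + if i = j then p i ω * (1 - p i ω) else 0 := by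
  have hXbdd : ∀ i ω, ‖X i ω‖ ≤ 1 := fun i ω => by rcases hX01 i ω with h | h <;> simp [h]
  have hXint : ∀ i, Integrable (X i) μ := fun i =>
    .of_bound (hXmeas i).aestronglyMeasurable 1 (ae_of_all _ (hXbdd i))
  have hzX : ∀ i j, Integrable (z i * X j) μ := fun i j =>
    (hXint j).bdd_mul ((hz i).mono hm).aestronglyMeasurable (ae_of_all _ (hzC i))
  have hzz : Integrable (z i * z j) μ :=
    (Integrable.of_bound ((hz j).mono hm).aestronglyMeasurable C (ae_of_all _ (hzC j))).bdd_mul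
      ((hz i).mono hm).aestronglyMeasurable (ae_of_all _ (hzC i))
  have hXX : μ[X i * X j | m] =ᵐ[μ] fun ω => p i ω * p j ω +
      if i = j then p i ω * (1 - p i ω) else 0 := by
    by_cases hij : i = j
    · subst hij
      have hsq : X i * X i = X i := funext fun ω => by
        rcases hX01 i ω with h | h <;> simp [h]
      filter_upwards [hp i] with ω hω
      simp only [hsq, hω, if_true]
      ring
    · filter_upwards [hindep i j hij] with ω hω
      simp [hω, hij]
  filter_upwards [condExp_sub_mul_sub hm (hz i) (hz j) (hXint i) (hXint j)
    ((hXint j).bdd_mul (hXmeas i).aestronglyMeasurable (ae_of_all _ (hXbdd i))) (hzX i j)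
    (hzX j i) hzz, hXX, hp i, hp j] with ω h hXXω hpi hpj
  simp only [Pi.add_apply, Pi.sub_apply, Pi.mul_apply] at h hpi hpj
  rw [h, hXXω, hpi, hpj]
  ring

end CondExp

section Urn

variable {Ω ι : Type*} {a b : ℕ} {I Z : ℕ → ι → Ω → ℝ}

theorem urn_step_mem_Icc {c x y : ℝ} (hc : 0 ≤ c) (hx : x ∈ Set.Icc 0 1) (hy : y ∈ Set.Icc 0 1) :
    (c * x + y) / (c + 1) ∈ Set.Icc 0 1 := by
  obtain ⟨hx0, hx1⟩ := hx
  obtain ⟨hy0, hy1⟩ := hy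
  constructor
  · positivity
  · rw [div_le_one (by positivity)]
    nlinarith

theorem urn_mem_Icc (hI01 : ∀ t i ω, I (t + 1) i ω = 0 ∨ I (t + 1) i ω = 1)
    (hZ0 : ∀ i ω, Z 0 i ω = (a : ℝ) / ((a : ℝ) + b))
    (hZrec : ∀ t i ω, Z (t + 1) i ω =
      (((a : ℝ) + b + t) * Z t i ω + I (t + 1) i ω) / ((a : ℝ) + b + t + 1)) :
    ∀ t i ω, Z t i ω ∈ Set.Icc 0 1
  | 0, i, ω => by
    rw [hZ0]
    exact ⟨by positivity, div_le_one_of_le₀ (by simp) (by positivity)⟩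
  | t + 1, i, ω => by
    rw [hZrec]
    refine urn_step_mem_Icc (by positivity) (urn_mem_Icc hI01 hZ0 hZrec t i ω) ?_
    rcases hI01 t i ω with h | h <;> simp [h]

theorem urn_stronglyMeasurable {ℱ : ℕ → MeasurableSpace Ω} (hℱmono : Monotone ℱ)
    (hImeas : ∀ t i, StronglyMeasurable[ℱ (t + 1)] (I (t + 1) i))
    (hZ0 : ∀ i ω, Z 0 i ω = (a : ℝ) / ((a : ℝ) + b))
    (hZrec : ∀ t i ω, Z (t + 1) i ω =
      (((a : ℝ) + b + t) * Z t i ω + I (t + 1) i ω) / ((a : ℝ) + b + t + 1)) :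
    ∀ t i, StronglyMeasurable[ℱ t] (Z t i)
  | 0, i => by
    rw [funext (hZ0 i)]
    exact stronglyMeasurable_const
  | t + 1, i => by
    simp_rw [funext (hZrec t i), div_eq_mul_inv]
    exact ((stronglyMeasurable_const.mul ((urn_stronglyMeasurable hℱmono hImeas hZ0 hZrec t i).mono
      (hℱmono t.le_succ))).add (hImeas t i)).mul stronglyMeasurable_const

theorem urn_increment
    (hZrec : ∀ t i ω, Z (t + 1) i ω =
      (((a : ℝ) + b + t) * Z t i ω + I (t + 1) i ω) / ((a : ℝ) + b + t + 1)) (t : ℕ) (i : ι)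
    (ω : Ω) : Z (t + 1) i ω - Z t i ω = (I (t + 1) i ω - Z t i ω) / ((a : ℝ) + b + t + 1) := by
  rw [hZrec]
  field_simp
  ring

end Urn

noncomputable section InteractingUrns

variable {N : ℕ}

def urnSuccessProb (α : ℝ) (z : Fin N → ℝ) (i : Fin N) : ℝ :=
  α * ((∑ k, z k) / N) + (1 - α) * z i

/-- `E[(I(i) - z i) (I(j) - z j) | ℱ]` for the next draws `I` given the proportions `z`. -/
def urnCondCov (α : ℝ) (z : Fin N → ℝ) (i j : Fin N) : ℝ :=
  (urnSuccessProb α z i - z i) * (urnSuccessProb α z j - z j) +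
    if i = j then urnSuccessProb α z i * (1 - urnSuccessProb α z i) else 0

theorem tendsto_urnSuccessProb {α L : ℝ} {z : ℕ → Fin N → ℝ}
    (hz : ∀ i, Tendsto (fun t => z t i) atTop (nhds L)) (i : Fin N) :
    Tendsto (fun t => urnSuccessProb α (z t) i) atTop (nhds L) := by
  have hN : (N : ℝ) ≠ 0 := Nat.cast_ne_zero.2 i.pos.ne'
  have hmean : Tendsto (fun t => (∑ k, z t k) / N) atTop (nhds L) := by
    have h := (tendsto_finsetSum univ fun k _ => hz k).div_const (N : ℝ)
    rwa [sum_const, card_univ, Fintype.card_fin, nsmul_eq_mul, mul_div_cancel_left₀ _ hN] at h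
  have h := (hmean.const_mul α).add ((hz i).const_mul (1 - α))
  rwa [show α * L + (1 - α) * L = L by ring] at h

theorem tendsto_sum_urnCondCov {α L : ℝ} {z : ℕ → Fin N → ℝ}
    (hz : ∀ i, Tendsto (fun t => z t i) atTop (nhds L)) (j : Fin N) :
    Tendsto (fun t => ∑ i, urnCondCov α (z t) j i) atTop (nhds (L - L ^ 2)) := by
  have hp := tendsto_urnSuccessProb (α := α) hz
  have hterm : ∀ i, Tendsto (fun t => urnCondCov α (z t) j i) atTop
      (nhds ((L - L) * (L - L) + if j = i then L * (1 - L) else 0)) := fun i => by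
    refine ((hp j).sub (hz j)).mul ((hp i).sub (hz i)) |>.add ?_
    split_ifs
    · exact (hp j).mul (tendsto_const_nhds.sub (hp j))
    · exact tendsto_const_nhds
  convert tendsto_finsetSum univ fun i _ => hterm i using 1
  simp only [sub_self, mul_zero, zero_add, sum_ite_eq, mem_univ, if_true]
  ring_nf

variable {Ω : Type*} {a b : ℕ} {I Z : ℕ → Fin N → Ω → ℝ}

theorem urn_cov_integrand_eq
    (hZrec : ∀ t i ω, Z (t + 1) i ω =
      (((a : ℝ) + b + t) * Z t i ω + I (t + 1) i ω) / ((a : ℝ) + b + t + 1))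
    (j : Fin N) (k : ℕ) (ω : Ω) :
    (k : ℝ) ^ 2 * (Z (k + 1) j ω - Z k j ω) * ((∑ i, Z (k + 1) i ω) / N - (∑ i, Z k i ω) / N) =
      ((k : ℝ) ^ 2 / ((a : ℝ) + b + k + 1) ^ 2 * (1 / N)) *
        ∑ i, (I (k + 1) j ω - Z k j ω) * (I (k + 1) i ω - Z k i ω) := by
  rw [← sub_div, ← sum_sub_distrib]
  simp only [urn_increment hZrec, ← sum_div, ← mul_sum]
  field_simp

theorem urn_condExp_cov_eq [m0 : MeasurableSpace Ω] {P : Measure Ω} [IsFiniteMeasure P] {α : ℝ}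
    {ℱ : MeasurableSpace Ω} (hℱle : ℱ ≤ m0) (k : ℕ)
    (hI01 : ∀ i ω, I (k + 1) i ω = 0 ∨ I (k + 1) i ω = 1)
    (hImeas : ∀ i, StronglyMeasurable[m0] (I (k + 1) i))
    (hZmeas : ∀ i, StronglyMeasurable[ℱ] (Z k i)) (hZ01 : ∀ i ω, Z k i ω ∈ Set.Icc 0 1)
    (hZrec : ∀ t i ω, Z (t + 1) i ω =
      (((a : ℝ) + b + t) * Z t i ω + I (t + 1) i ω) / ((a : ℝ) + b + t + 1))
    (hcond : ∀ i, P[I (k + 1) i|ℱ] =ᵐ[P] fun ω => urnSuccessProb α (fun l => Z k l ω) i)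
    (hcondindep : ∀ i j, i ≠ j →
      P[fun ω => I (k + 1) i ω * I (k + 1) j ω|ℱ] =ᵐ[P] fun ω =>
        urnSuccessProb α (fun l => Z k l ω) i * urnSuccessProb α (fun l => Z k l ω) j)
    (j : Fin N) :
    P[fun ω => (k : ℝ) ^ 2 * (Z (k + 1) j ω - Z k j ω) *
        ((∑ i, Z (k + 1) i ω) / N - (∑ i, Z k i ω) / N)|ℱ] =ᵐ[P] fun ω =>
      ((k : ℝ) ^ 2 / ((a : ℝ) + b + k + 1) ^ 2 * (1 / N)) *
        ∑ i, urnCondCov α (fun l => Z k l ω) j i := by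
  set c : ℝ := (k : ℝ) ^ 2 / ((a : ℝ) + b + k + 1) ^ 2 * (1 / N)
  set f : Fin N → Ω → ℝ := fun i => (I (k + 1) j - Z k j) * (I (k + 1) i - Z k i)
  have hcentred : ∀ i ω, ‖I (k + 1) i ω - Z k i ω‖ ≤ 1 := fun i ω => by
    obtain ⟨hZ0, hZ1⟩ := hZ01 i ω
    rw [Real.norm_eq_abs, abs_le]
    rcases hI01 i ω with h | h <;> rw [h] <;> constructor <;> linarith
  have hf : ∀ i, Integrable (f i) P := fun i =>
    .of_bound (((hImeas j).sub ((hZmeas j).mono hℱle)).mul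
      ((hImeas i).sub ((hZmeas i).mono hℱle))).aestronglyMeasurable 1
      (ae_of_all _ fun ω => by
        simp only [f, Pi.mul_apply, Pi.sub_apply, norm_mul]
        exact mul_le_one₀ (hcentred j ω) (norm_nonneg _) (hcentred i ω))
  have hintegrand : (fun ω => (k : ℝ) ^ 2 * (Z (k + 1) j ω - Z k j ω) *
      ((∑ i, Z (k + 1) i ω) / N - (∑ i, Z k i ω) / N)) = c • ∑ i, f i := by
    ext ω
    simp only [urn_cov_integrand_eq hZrec, Pi.smul_apply, Finset.sum_apply, smul_eq_mul, c, f,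
      Pi.mul_apply, Pi.sub_apply]
  have hcov := fun i => condExp_bernoulli_sub_mul_sub hℱle (μ := P) hI01 hImeas hZmeas
    (fun i ω => (Real.norm_of_nonneg (hZ01 i ω).1).trans_le (hZ01 i ω).2) hcond hcondindep j i
  rw [hintegrand]
  filter_upwards [condExp_smul c (∑ i, f i) ℱ, condExp_finsetSum (fun i _ => hf i) ℱ,
    ae_all_iff.2 hcov] with ω hsmul hsum hcovω
  rw [hsmul, Pi.smul_apply, hsum, Finset.sum_apply, smul_eq_mul]
  exact congrArg (c * ·) (sum_congr rfl fun i _ => hcovω i)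

end InteractingUrns

theorem stmt_19_general {Ω : Type*} [m0 : MeasurableSpace Ω] (P : Measure Ω) [IsProbabilityMeasure P]
    (α : ℝ)
    (N : ℕ) (a b : ℕ)
    (ℱ : ℕ → MeasurableSpace Ω) (hℱle : ∀ t, ℱ t ≤ m0) (hℱmono : Monotone ℱ)
    (I Z : ℕ → Fin N → Ω → ℝ)
    -- each I_{t+1}(i) is an indicator, ℱ_{t+1}-measurable
    (hI01 : ∀ t i ω, I (t + 1) i ω = 0 ∨ I (t + 1) i ω = 1)
    (hImeas : ∀ t i, StronglyMeasurable[ℱ (t + 1)] (I (t + 1) i))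
    -- initial composition: a red and b black balls in each urn
    (hZ0 : ∀ i ω, Z 0 i ω = (a : ℝ) / ((a : ℝ) + b))
    -- proportion dynamics
    (hZrec : ∀ t i ω, Z (t + 1) i ω =
      (((a : ℝ) + b + t) * Z t i ω + I (t + 1) i ω) / ((a : ℝ) + b + t + 1))
    -- conditional probability of adding a red ball in urn i
    (hcond : ∀ t i, P[I (t + 1) i|ℱ t] =ᵐ[P]
      fun ω => α * ((∑ k, Z t k ω) / N) + (1 - α) * Z t i ω)
    -- conditional independence of the urns
    (hcondindep : ∀ t, ∀ i j, i ≠ j →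
      P[fun ω => I (t + 1) i ω * I (t + 1) j ω|ℱ t] =ᵐ[P]
        fun ω => (α * ((∑ k, Z t k ω) / N) + (1 - α) * Z t i ω) *
          (α * ((∑ k, Z t k ω) / N) + (1 - α) * Z t j ω))
    (j : Fin N) (Zlim : Ω → ℝ)
    (hZlim : ∀ i, ∀ᵐ ω ∂P, Tendsto (fun t => Z t i ω) atTop (nhds (Zlim ω))) :
    ∀ᵐ ω ∂P, Tendsto (fun k : ℕ =>
        (P[fun ω' => (k : ℝ) ^ 2 * (Z (k + 1) j ω' - Z k j ω') *
            ((∑ i, Z (k + 1) i ω') / N - (∑ i, Z k i ω') / N)|ℱ k]) ω)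
      atTop (nhds ((1 / N) * (Zlim ω - Zlim ω ^ 2))) := by
  have hZ01 := urn_mem_Icc hI01 hZ0 hZrec
  have hZmeas := urn_stronglyMeasurable hℱmono hImeas hZ0 hZrec
  have hcov := fun k => urn_condExp_cov_eq (hℱle k) k (hI01 k)
    (fun i => (hImeas k i).mono (hℱle (k + 1))) (hZmeas k) (hZ01 k) hZrec (hcond k)
    (hcondindep k) j
  have hfactor : Tendsto (fun k : ℕ => (k : ℝ) ^ 2 / ((a : ℝ) + b + k + 1) ^ 2) atTop (nhds 1) := by
    convert (tendsto_natCast_div_add_atTop ((a : ℝ) + b + 1)).pow 2 using 1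
    · ext k
      rw [div_pow]
      ring
    · norm_num
  filter_upwards [ae_all_iff.2 hcov, ae_all_iff.2 hZlim] with ω hcovω hZω
  have hlim := (hfactor.mul_const (1 / (N : ℝ))).mul (tendsto_sum_urnCondCov (α := α) hZω j)
  rw [one_mul] at hlim
  exact hlim.congr fun k => (hcovω k).symm

/-- In the system of N interacting Pólya urns, the conditional covariance satisfies
`E[k² (Z_{k+1}(j) - Z_k(j))(Z̄_{k+1} - Z̄_k) | ℱ_k] → (1/N)(Z - Z²)` a.s. -/
theorem stmt_19 {Ω : Type*} [m0 : MeasurableSpace Ω] (P : Measure Ω) [IsProbabilityMeasure P]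
    (α : ℝ) (hα0 : 0 ≤ α) (hα1 : α ≤ 1)
    (N : ℕ) (hN : 1 < N) (a b : ℕ) (ha : 1 ≤ a) (hb : 1 ≤ b)
    (ℱ : ℕ → MeasurableSpace Ω) (hℱle : ∀ t, ℱ t ≤ m0) (hℱmono : Monotone ℱ)
    (I Z : ℕ → Fin N → Ω → ℝ)
    -- each I_{t+1}(i) is an indicator, ℱ_{t+1}-measurable
    (hI01 : ∀ t i ω, I (t + 1) i ω = 0 ∨ I (t + 1) i ω = 1)
    (hImeas : ∀ t i, StronglyMeasurable[ℱ (t + 1)] (I (t + 1) i))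
    -- initial composition: a red and b black balls in each urn
    (hZ0 : ∀ i ω, Z 0 i ω = (a : ℝ) / ((a : ℝ) + b))
    -- proportion dynamics
    (hZrec : ∀ t i ω, Z (t + 1) i ω =
      (((a : ℝ) + b + t) * Z t i ω + I (t + 1) i ω) / ((a : ℝ) + b + t + 1))
    -- conditional probability of adding a red ball in urn i
    (hcond : ∀ t i, P[I (t + 1) i|ℱ t] =ᵐ[P]
      fun ω => α * ((∑ k, Z t k ω) / N) + (1 - α) * Z t i ω)
    -- conditional independence of the urns
    (hcondindep : ∀ t, ∀ i j, i ≠ j →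
      P[fun ω => I (t + 1) i ω * I (t + 1) j ω|ℱ t] =ᵐ[P]
        fun ω => (α * ((∑ k, Z t k ω) / N) + (1 - α) * Z t i ω) *
          (α * ((∑ k, Z t k ω) / N) + (1 - α) * Z t j ω))
    (j : Fin N) (Zlim : Ω → ℝ)
    (hZlim : ∀ i, ∀ᵐ ω ∂P, Tendsto (fun t => Z t i ω) atTop (nhds (Zlim ω))) :
    ∀ᵐ ω ∂P, Tendsto (fun k : ℕ =>
        (P[fun ω' => (k : ℝ) ^ 2 * (Z (k + 1) j ω' - Z k j ω') *
            ((∑ i, Z (k + 1) i ω') / N - (∑ i, Z k i ω') / N)|ℱ k]) ω)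
      atTop (nhds ((1 / N) * (Zlim ω - Zlim ω ^ 2))) :=
  stmt_19_general (m0 := m0) P α N a b ℱ hℱle hℱmono I Z hI01 hImeas hZ0 hZrec hcond hcondindep j
    Zlim hZlim
end
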